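/- arXiv:1306.4373 — 7 statements merged into one kernel-verified Lean document; each statement's English description precedes it below -/
import Mathlib

section
/- Assume: (ii) there are constants A, B > 0 such that every v ∈ H has ιv ∈ L^p(μ) and ‖ιv‖²_{L^p} ≤ A·E(v) + B·‖ιv‖²_{L²}; (iii) V : M → ℝ is integrable and V₋ is infinitesimally form bounded with respect to E, i.e. for every ε > 0 there is c(ε) > 0 with ∫_M V₋·(ιv)² dμ ≤ ε·E(v) + c(ε)·‖ιv‖²_{L²} for all v ∈ H. Then for every Â > A there exists B̂ > 0 such that ‖ιv‖²_{L^p} ≤ Â·E_V(v) + B̂·‖ιv‖²_{L²} for every v ∈ H with ∫_M V₊·(ιv)² dμ < ∞. -/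
open MeasureTheory ENNReal

/-- **Sobolev inequality for the perturbed form** (inequality (3.2) of
Akutagawa–Carron–Mazzeo, *The Yamabe problem on Dirichlet spaces*).

A nonnegative closed symmetric form on `L²(μ)` is encoded by a real Hilbert space `H`
together with an injective bounded linear map `ι : H → L²(μ)` with `‖ι v‖_{L²} ≤ ‖v‖_H`;
the form is `E v = ‖v‖_H² − ‖ι v‖²_{L²}` and, for a potential `V`,
`E_V v = E v + ∫ V (ι v)² dμ`.

Assume the Sobolev inequality `‖ι v‖²_{L^p} ≤ A E(v) + B ‖ι v‖²_{L²}` with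
`p = 2ν/(ν−2)`, `ν > 2`, and that `V` is integrable with `V₋` infinitesimally form
bounded with respect to `E`. Then for every `Ahat > A` there is `Bhat > 0` with
`‖ι v‖²_{L^p} ≤ Ahat E_V(v) + Bhat ‖ι v‖²_{L²}` for all `v ∈ H` with `∫ V₊ (ι v)² dμ < ∞`. -/
theorem sobolev_inequality_perturbed
    {M : Type*} [MeasurableSpace M] (μ : Measure M) [IsFiniteMeasure μ]
    (ν : ℝ) (hν : 2 < ν)
    {H : Type*} [NormedAddCommGroup H] [InnerProductSpace ℝ H] [CompleteSpace H]
    (ι : H →L[ℝ] Lp ℝ 2 μ)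
    (hinj : Function.Injective ι)
    (hcontr : ∀ v : H, ‖ι v‖ ≤ ‖v‖)
    (A B : ℝ) (hA : 0 < A) (hB : 0 < B)
    (hSob : ∀ v : H,
      MemLp (ι v) (ENNReal.ofReal (2 * ν / (ν - 2))) μ ∧
      ((eLpNorm (ι v) (ENNReal.ofReal (2 * ν / (ν - 2))) μ).toReal) ^ 2
        ≤ A * (‖v‖ ^ 2 - ‖ι v‖ ^ 2) + B * ‖ι v‖ ^ 2)
    (V : M → ℝ) (hVint : Integrable V μ)
    (hVm : ∀ ε : ℝ, 0 < ε → ∃ c : ℝ, 0 < c ∧ ∀ v : H,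
      (∫⁻ x, ENNReal.ofReal (max (-(V x)) 0 * (ι v x) ^ 2) ∂μ)
        ≤ ENNReal.ofReal (ε * (‖v‖ ^ 2 - ‖ι v‖ ^ 2) + c * ‖ι v‖ ^ 2)) :
    ∀ Ahat : ℝ, A < Ahat → ∃ Bhat : ℝ, 0 < Bhat ∧ ∀ v : H,
      (∫⁻ x, ENNReal.ofReal (max (V x) 0 * (ι v x) ^ 2) ∂μ) < ⊤ →
      ((eLpNorm (ι v) (ENNReal.ofReal (2 * ν / (ν - 2))) μ).toReal) ^ 2
        ≤ Ahat * ((‖v‖ ^ 2 - ‖ι v‖ ^ 2) + ∫ x, V x * (ι v x) ^ 2 ∂μ)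
          + Bhat * ‖ι v‖ ^ 2 := by
  intro Ahat hAhat
  have hA' : 0 < Ahat := hA.trans hAhat
  have hε : 0 < (Ahat - A) / Ahat := div_pos (by linarith) hA'
  obtain ⟨c, hc, hcV⟩ := hVm ((Ahat - A) / Ahat) hε
  refine ⟨Ahat * c + B, by positivity, ?_⟩
  intro v hVp
  have hE : 0 ≤ ‖v‖ ^ 2 - ‖ι v‖ ^ 2 := by
    have h1 := hcontr v
    have h2 := norm_nonneg (ι v)
    nlinarith
  have hm : AEStronglyMeasurable (fun x => (ι v x) ^ 2) μ := by
    simpa [sq, Pi.mul_def] using (Lp.aestronglyMeasurable (ι v)).mul (Lp.aestronglyMeasurable (ι v))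
  -- integrability of the negative part
  have hnnm : 0 ≤ᵐ[μ] fun x => max (-(V x)) 0 * (ι v x) ^ 2 :=
    Filter.Eventually.of_forall fun x => mul_nonneg (le_max_right _ _) (sq_nonneg _)
  have hintm : Integrable (fun x => max (-(V x)) 0 * (ι v x) ^ 2) μ := by
    refine ⟨(hVint.1.neg.sup aestronglyMeasurable_const).mul hm, ?_⟩
    rw [hasFiniteIntegral_iff_ofReal hnnm]
    exact lt_of_le_of_lt (hcV v) ENNReal.ofReal_lt_top
  -- integrability of the positive part
  have hnnp : 0 ≤ᵐ[μ] fun x => max (V x) 0 * (ι v x) ^ 2 :=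
    Filter.Eventually.of_forall fun x => mul_nonneg (le_max_right _ _) (sq_nonneg _)
  have hintp : Integrable (fun x => max (V x) 0 * (ι v x) ^ 2) μ := by
    refine ⟨(hVint.1.sup aestronglyMeasurable_const).mul hm, ?_⟩
    rw [hasFiniteIntegral_iff_ofReal hnnp]
    exact hVp
  -- split the integral
  have hsplit : (∫ x, V x * (ι v x) ^ 2 ∂μ)
      = (∫ x, max (V x) 0 * (ι v x) ^ 2 ∂μ) - ∫ x, max (-(V x)) 0 * (ι v x) ^ 2 ∂μ := by
    rw [← integral_sub hintp hintm]
    congr 1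
    funext x
    rw [← sub_mul, max_zero_sub_max_neg_zero_eq_self]
  have hIp : 0 ≤ ∫ x, max (V x) 0 * (ι v x) ^ 2 ∂μ := integral_nonneg_of_ae hnnp
  have hIm : (∫ x, max (-(V x)) 0 * (ι v x) ^ 2 ∂μ)
      ≤ (Ahat - A) / Ahat * (‖v‖ ^ 2 - ‖ι v‖ ^ 2) + c * ‖ι v‖ ^ 2 := by
    rw [integral_eq_lintegral_of_nonneg_ae hnnm hintm.1]
    calc (∫⁻ x, ENNReal.ofReal (max (-(V x)) 0 * (ι v x) ^ 2) ∂μ).toReal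
        ≤ (ENNReal.ofReal ((Ahat - A) / Ahat * (‖v‖ ^ 2 - ‖ι v‖ ^ 2) + c * ‖ι v‖ ^ 2)).toReal :=
          ENNReal.toReal_mono ENNReal.ofReal_ne_top (hcV v)
      _ = _ := ENNReal.toReal_ofReal
          (add_nonneg (mul_nonneg hε.le hE) (mul_nonneg hc.le (sq_nonneg _)))
  have hS := (hSob v).2
  have hmul : Ahat * (∫ x, max (-(V x)) 0 * (ι v x) ^ 2 ∂μ)
      ≤ Ahat * ((Ahat - A) / Ahat * (‖v‖ ^ 2 - ‖ι v‖ ^ 2) + c * ‖ι v‖ ^ 2) :=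
    mul_le_mul_of_nonneg_left hIm hA'.le
  have hfield : Ahat * ((Ahat - A) / Ahat) = Ahat - A := by
    field_simp
  have hsq : (0:ℝ) ≤ ‖ι v‖ ^ 2 := sq_nonneg _
  rw [hsplit]
  nlinarith [mul_le_mul_of_nonneg_left hIp hA'.le]
end

section
/- Let α > 1 and L ≥ 1. Define φ_{α,L}(x) := L^α · f_α(x/L) for x ≥ 0, and G_{α,L}(x) := ∫₀ˣ (φ_{α,L}′(t))² dt for x ≥ 0. Then for every x ≥ 0: (1) φ_{α,L}(x) ≤ x^α, and (2) x·G_{α,L}(x) ≤ (α²/(2α−1))·(φ_{α,L}(x))². -/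
open Real MeasureTheory Set Filter
open scoped Interval


/-- The truncated power function of the Moser iteration in Proposition 4.3 of
Akutagawa–Carron–Mazzeo, *The Yamabe problem on Dirichlet spaces*:
`f_α(x) = x^α` for `0 ≤ x ≤ α^{−1/(α−1)}` and
`f_α(x) = x + α^{−α/(α−1)} − α^{−1/(α−1)}` for `x ≥ α^{−1/(α−1)}`;
it is `C¹` and convex. -/
noncomputable def truncPow (α : ℝ) (x : ℝ) : ℝ :=
  if x ≤ α ^ (-(1 / (α - 1))) then x ^ α
  else x + (α ^ (-(α / (α - 1))) - α ^ (-(1 / (α - 1))))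

/-- The rescaled truncated power `φ_{α,L}(x) = L^α f_α(x/L)`. -/
noncomputable def truncPowScaled (α L : ℝ) (x : ℝ) : ℝ :=
  L ^ α * truncPow α (x / L)

/-- `G_{α,L}(x) = ∫₀ˣ (φ_{α,L}′(t))² dt`. -/
noncomputable def truncPowG (α L : ℝ) (x : ℝ) : ℝ :=
  ∫ t in (0 : ℝ)..x, (deriv (truncPowScaled α L) t) ^ 2

/-- the break point of `f_α`. -/
noncomputable def tpc (α : ℝ) : ℝ := α ^ (-(1 / (α - 1)))

/-- the piecewise derivative of `truncPowScaled α L`. -/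
noncomputable def tpD (α L : ℝ) (t : ℝ) : ℝ :=
  if t ≤ tpc α * L then α * t ^ (α - 1) else L ^ (α - 1)

section Aux

variable {α L : ℝ}

lemma tpc_pos (hα : 1 < α) : 0 < tpc α := rpow_pos_of_pos (by linarith) _

lemma tpc_rpow_sub_one (hα : 1 < α) : tpc α ^ (α - 1) = α⁻¹ := by
  have h0 : (0:ℝ) ≤ α := by linarith
  have h1 : α - 1 ≠ 0 := sub_ne_zero.2 hα.ne'
  rw [tpc, ← Real.rpow_mul h0, show -(1 / (α - 1)) * (α - 1) = -1 by field_simp,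
    Real.rpow_neg_one]

lemma tpc_rpow_self (hα : 1 < α) : tpc α ^ α = α ^ (-(α / (α - 1))) := by
  have h0 : (0:ℝ) ≤ α := by linarith
  rw [tpc, ← Real.rpow_mul h0]
  congr 1
  field_simp

lemma phi_low (hα : 1 < α) (hL : 1 ≤ L) {t : ℝ} (ht0 : 0 ≤ t) (ht : t ≤ tpc α * L) :
    truncPowScaled α L t = t ^ α := by
  have hL0 : (0:ℝ) < L := by linarith
  have h : t / L ≤ α ^ (-(1 / (α - 1))) := by
    rw [div_le_iff₀ hL0]; exact ht
  rw [truncPowScaled, truncPow, if_pos h, div_rpow ht0 hL0.le,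
    mul_div_cancel₀ _ (ne_of_gt (rpow_pos_of_pos hL0 α))]

lemma phi_high (hα : 1 < α) (hL : 1 ≤ L) {t : ℝ} (ht : tpc α * L < t) :
    truncPowScaled α L t
      = L ^ (α - 1) * t + L ^ α * (α ^ (-(α / (α - 1))) - tpc α) := by
  have hL0 : (0:ℝ) < L := by linarith
  have h : ¬ t / L ≤ α ^ (-(1 / (α - 1))) := by
    rw [not_le, lt_div_iff₀ hL0]; rw [tpc] at ht; linarith [ht]
  rw [truncPowScaled, truncPow, if_neg h]
  have he : L ^ α * (t / L) = L ^ (α - 1) * t := by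
    rw [rpow_sub hL0, rpow_one]; field_simp
  rw [mul_add, he, tpc]

lemma phi_deriv_low (hα : 1 < α) (hL : 1 ≤ L) {t : ℝ} (ht0 : 0 < t)
    (ht : t < tpc α * L) :
    deriv (truncPowScaled α L) t = α * t ^ (α - 1) := by
  have heq : truncPowScaled α L =ᶠ[nhds t] fun s => s ^ α := by
    filter_upwards [Ioo_mem_nhds ht0 ht] with s hs
    exact phi_low hα hL hs.1.le hs.2.le
  rw [heq.deriv_eq, Real.deriv_rpow_const t α]

lemma phi_deriv_high (hα : 1 < α) (hL : 1 ≤ L) {t : ℝ} (ht : tpc α * L < t) :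
    deriv (truncPowScaled α L) t = L ^ (α - 1) := by
  have heq : truncPowScaled α L =ᶠ[nhds t]
      fun s => L ^ (α - 1) * s + L ^ α * (α ^ (-(α / (α - 1))) - tpc α) := by
    filter_upwards [Ioi_mem_nhds ht] with s hs
    exact phi_high hα hL hs
  rw [heq.deriv_eq]
  have h : HasDerivAt (fun s : ℝ => L ^ (α - 1) * s
      + L ^ α * (α ^ (-(α / (α - 1))) - tpc α)) (L ^ (α - 1)) t := by
    simpa using ((hasDerivAt_id t).const_mul (L ^ (α - 1))).add_const
      (L ^ α * (α ^ (-(α / (α - 1))) - tpc α))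
  exact h.deriv

lemma phi_deriv_ae (hα : 1 < α) (hL : 1 ≤ L) {x : ℝ} (hx : 0 ≤ x) :
    ∀ᵐ t : ℝ, t ∈ Ι (0:ℝ) x → (deriv (truncPowScaled α L) t) ^ 2 = (tpD α L t) ^ 2 := by
  have hne : ∀ᵐ t : ℝ, t ≠ tpc α * L := by
    refine (ae_iff.2 ?_); simpa using measure_singleton (tpc α * L)
  filter_upwards [hne] with t hne ht
  rw [Set.uIoc_of_le hx] at ht
  rcases lt_or_gt_of_ne hne with h | h
  · rw [phi_deriv_low hα hL ht.1 h, tpD, if_pos h.le]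
  · rw [phi_deriv_high hα hL h, tpD, if_neg (not_le.2 h)]

lemma tpD_cont (hα : 1 < α) (hL : 1 ≤ L) : Continuous (tpD α L) := by
  have hL0 : (0:ℝ) < L := by linarith
  refine Continuous.if_le ?_ continuous_const continuous_id continuous_const ?_
  · exact continuous_const.mul (Real.continuous_rpow_const (by linarith))
  · intro t ht
    subst ht
    rw [mul_rpow (tpc_pos hα).le hL0.le, tpc_rpow_sub_one hα]
    field_simp

lemma tpD_sq_low_ae (hα : 1 < α) (hL : 1 ≤ L) {a b : ℝ} (hab : a ≤ b) (ha : 0 ≤ a)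
    (hb : b ≤ tpc α * L) :
    ∀ᵐ t : ℝ, t ∈ Ι a b → (tpD α L t) ^ 2 = α ^ 2 * t ^ (2 * α - 2) := by
  refine Eventually.of_forall fun t ht => ?_
  rw [Set.uIoc_of_le hab] at ht
  have ht0 : 0 < t := lt_of_le_of_lt ha ht.1
  rw [tpD, if_pos (ht.2.trans hb), mul_pow, ← Real.rpow_natCast (t ^ (α - 1)) 2,
    ← Real.rpow_mul ht0.le, show (α - 1) * ((2:ℕ):ℝ) = 2 * α - 2 by push_cast; ring]

lemma G_eq (hα : 1 < α) (hL : 1 ≤ L) {x : ℝ} (hx : 0 ≤ x) :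
    truncPowG α L x = ∫ t in (0:ℝ)..x, (tpD α L t) ^ 2 :=
  intervalIntegral.integral_congr_ae (phi_deriv_ae hα hL hx)

lemma G_low (hα : 1 < α) (hL : 1 ≤ L) {x : ℝ} (hx0 : 0 ≤ x) (hx : x ≤ tpc α * L) :
    truncPowG α L x = α ^ 2 / (2 * α - 1) * x ^ (2 * α - 1) := by
  have h1 : (-1:ℝ) < 2 * α - 2 := by linarith
  rw [G_eq hα hL hx0,
    intervalIntegral.integral_congr_ae (tpD_sq_low_ae hα hL hx0 le_rfl hx),
    intervalIntegral.integral_const_mul, integral_rpow (Or.inl h1)]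
  have h0 : (0:ℝ) ^ (2 * α - 2 + 1) = 0 := by
    rw [Real.zero_rpow]; linarith
  rw [h0, show 2 * α - 2 + 1 = 2 * α - 1 by ring]
  ring_nf

lemma G_high (hα : 1 < α) (hL : 1 ≤ L) {x : ℝ} (hx : tpc α * L ≤ x) :
    truncPowG α L x = α ^ 2 / (2 * α - 1) * (tpc α * L) ^ (2 * α - 1)
      + (x - tpc α * L) * (L ^ (α - 1)) ^ 2 := by
  have hL0 : (0:ℝ) < L := by linarith
  have hm0 : (0:ℝ) ≤ tpc α * L := (mul_pos (tpc_pos hα) hL0).le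
  have hx0 : 0 ≤ x := hm0.trans hx
  have hcont : Continuous fun t => (tpD α L t) ^ 2 := (tpD_cont hα hL).pow 2
  rw [G_eq hα hL hx0,
    ← intervalIntegral.integral_add_adjacent_intervals
      (hcont.intervalIntegrable 0 (tpc α * L)) (hcont.intervalIntegrable (tpc α * L) x)]
  have h1 : ∫ t in (0:ℝ)..(tpc α * L), (tpD α L t) ^ 2
      = α ^ 2 / (2 * α - 1) * (tpc α * L) ^ (2 * α - 1) := by
    have h1' : (-1:ℝ) < 2 * α - 2 := by linarith
    rw [intervalIntegral.integral_congr_ae (tpD_sq_low_ae hα hL hm0 le_rfl le_rfl),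
      intervalIntegral.integral_const_mul, integral_rpow (Or.inl h1')]
    have h0 : (0:ℝ) ^ (2 * α - 2 + 1) = 0 := by
      rw [Real.zero_rpow]; linarith
    rw [h0, show 2 * α - 2 + 1 = 2 * α - 1 by ring]
    ring_nf
  have h2 : ∫ t in (tpc α * L)..x, (tpD α L t) ^ 2
      = (x - tpc α * L) * (L ^ (α - 1)) ^ 2 := by
    have hc : ∀ᵐ t : ℝ, t ∈ Ι (tpc α * L) x → (tpD α L t) ^ 2 = (L ^ (α - 1)) ^ 2 := by
      refine Eventually.of_forall fun t ht => ?_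
      rw [Set.uIoc_of_le hx] at ht
      rw [tpD, if_neg (not_le.2 ht.1)]
    rw [intervalIntegral.integral_congr_ae hc, intervalIntegral.integral_const, smul_eq_mul]
  rw [h1, h2]

end Aux

/-- **Test-function estimates for the Moser iteration** (inequalities (4.5) of
Akutagawa–Carron–Mazzeo, *The Yamabe problem on Dirichlet spaces*).

For `α > 1` and `L ≥ 1`, with `φ_{α,L}(x) = L^α f_α(x/L)` and
`G_{α,L}(x) = ∫₀ˣ (φ_{α,L}′(t))² dt`, one has for every `x ≥ 0`:
`φ_{α,L}(x) ≤ x^α` and `x G_{α,L}(x) ≤ (α²/(2α−1)) (φ_{α,L}(x))²`. -/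
theorem truncPowScaled_le_and_G_bound (α L : ℝ) (hα : 1 < α) (hL : 1 ≤ L) :
    ∀ x : ℝ, 0 ≤ x →
      truncPowScaled α L x ≤ x ^ α ∧
      x * truncPowG α L x ≤ (α ^ 2 / (2 * α - 1)) * (truncPowScaled α L x) ^ 2 := by
  intro x hx
  have hL0 : (0:ℝ) < L := by linarith
  have hc0 : 0 < tpc α := tpc_pos hα
  have hk : (0:ℝ) < 2 * α - 1 := by linarith
  have hα0 : (0:ℝ) < α := by linarith
  rcases le_or_gt x (tpc α * L) with hxm | hxm
  · -- low region
    have hphi : truncPowScaled α L x = x ^ α := phi_low hα hL hx hxm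
    refine ⟨le_of_eq hphi, ?_⟩
    rw [hphi, G_low hα hL hx hxm]
    rcases eq_or_lt_of_le hx with h0 | h0
    · rw [← h0, Real.zero_rpow hα0.ne']
      simp
    · have e1 : x * x ^ (2 * α - 1) = x ^ (2 * α) := by
        nth_rewrite 1 [← Real.rpow_one x]
        rw [← Real.rpow_add h0, show (1:ℝ) + (2 * α - 1) = 2 * α by ring]
      have e2 : (x ^ α) ^ 2 = x ^ (2 * α) := by
        rw [← Real.rpow_natCast (x ^ α) 2, ← Real.rpow_mul h0.le,
          show α * ((2:ℕ):ℝ) = 2 * α by push_cast; ring]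
      calc x * (α ^ 2 / (2 * α - 1) * x ^ (2 * α - 1))
          = α ^ 2 / (2 * α - 1) * (x * x ^ (2 * α - 1)) := by ring
        _ = α ^ 2 / (2 * α - 1) * x ^ (2 * α) := by rw [e1]
        _ = α ^ 2 / (2 * α - 1) * (x ^ α) ^ 2 := by rw [e2]
        _ ≤ α ^ 2 / (2 * α - 1) * (x ^ α) ^ 2 := le_rfl
  · -- high region
    set a := tpc α with ha
    set A := L ^ (α - 1) with hA
    have hA0 : 0 < A := rpow_pos_of_pos hL0 _
    have hm0 : 0 < a * L := mul_pos hc0 hL0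
    have hca1 : a ^ (α - 1) = α⁻¹ := by rw [ha]; exact tpc_rpow_sub_one hα
    have hcα : a ^ α = a * α⁻¹ := by
      nth_rewrite 1 [show α = 1 + (α - 1) by ring]
      rw [Real.rpow_add hc0, Real.rpow_one, hca1]
    have hLα : L ^ α = L * A := by
      nth_rewrite 1 [show α = 1 + (α - 1) by ring]
      rw [Real.rpow_add hL0, Real.rpow_one]
    have hmam : (a * L) ^ (α - 1) = α⁻¹ * A := by
      rw [mul_rpow hc0.le hL0.le, tpc_rpow_sub_one hα]
    have hm21 : (a * L) ^ (2 * α - 1) = (a * L) * ((α⁻¹ * A) * (α⁻¹ * A)) := by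
      rw [show 2 * α - 1 = 1 + ((α - 1) + (α - 1)) by ring, Real.rpow_add hm0,
        Real.rpow_one, Real.rpow_add hm0, hmam]
    have hphi : truncPowScaled α L x = A * x + L * A * (a * α⁻¹ - a) := by
      rw [phi_high hα hL hxm, ← tpc_rpow_self hα, hcα, hLα, ← ha, ← hA]
    constructor
    · -- part 1
      rw [hphi]
      have hmono : MonotoneOn (fun s : ℝ => s ^ α - A * s) (Ici (a * L)) := by
        apply monotoneOn_of_deriv_nonneg (convex_Ici _)
        · exact ((Real.continuous_rpow_const hα0.le).sub
            (continuous_const.mul continuous_id)).continuousOn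
        · intro s hs
          rw [interior_Ici] at hs
          have hs0 : (0:ℝ) < s := hm0.trans hs
          exact ((Real.hasDerivAt_rpow_const (Or.inl hs0.ne')).sub
            ((hasDerivAt_id s).const_mul A)).differentiableAt.differentiableWithinAt
        · intro s hs
          rw [interior_Ici] at hs
          have hs0 : (0:ℝ) < s := hm0.trans hs
          have hd : deriv (fun s : ℝ => s ^ α - A * s) s = α * s ^ (α - 1) - A := by
            have := ((Real.hasDerivAt_rpow_const (Or.inl hs0.ne')
              (p := α)).sub ((hasDerivAt_id s).const_mul A))
            have h2 := this.deriv
            simp only [mul_one] at h2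
            exact h2
          rw [hd, sub_nonneg]
          have h1 : (a * L) ^ (α - 1) ≤ s ^ (α - 1) :=
            Real.rpow_le_rpow hm0.le hs.le (by linarith)
          rw [hmam] at h1
          calc A = α * (α⁻¹ * A) := by field_simp
            _ ≤ α * s ^ (α - 1) := by
              exact mul_le_mul_of_nonneg_left h1 hα0.le
      have hfm : a * L ∈ Ici (a * L) := self_mem_Ici
      have hfx : x ∈ Ici (a * L) := le_of_lt hxm
      have := hmono hfm hfx hxm.le
      simp only at this
      have hmα : (a * L) ^ α = a * α⁻¹ * (L * A) := by
        rw [mul_rpow hc0.le hL0.le, hcα, hLα]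
      have hAm : A * (a * L) = a * (L * A) := by ring
      -- this : (a*L)^α - A*(a*L) ≤ x^α - A*x
      nlinarith [this, hmα, hAm]
    · -- part 2
      rw [hphi, G_high hα hL hxm.le, ← ha, ← hA, hm21]
      have key : α ^ 2 / (2 * α - 1) * (A * x + L * A * (a * α⁻¹ - a)) ^ 2
          - x * (α ^ 2 / (2 * α - 1) * (a * L * (α⁻¹ * A * (α⁻¹ * A))) + (x - a * L) * A ^ 2)
          = (α - 1) ^ 2 / (2 * α - 1) * A ^ 2 * (x - a * L) ^ 2 := by
        have hk' : 2 * α - 1 ≠ 0 := hk.ne'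
        have hα' : α ≠ 0 := hα0.ne'
        apply mul_left_cancel₀ hk'
        field_simp
        ring
      nlinarith [key, mul_nonneg (mul_nonneg (div_nonneg (sq_nonneg (α - 1)) hk.le)
        (sq_nonneg A)) (sq_nonneg (x - a * L))]
end

section
/- Let (M, 𝔐, μ) be a measure space, ν > 2, α > 1, and let u : M → [0,∞) be measurable with u ∈ L^{2α}(μ). Suppose there exists K ≥ 0 such that for every L ≥ 1, ‖φ_{α,L}(u)‖²_{L^{2ν/(ν−2)}(μ)} ≤ K·‖φ_{α,L}(u)‖²_{L²(μ)}. Then u ∈ L^{2αν/(ν−2)}(μ), and moreover ‖u^α‖²_{L^{2ν/(ν−2)}} ≤ K·‖u‖_{L^{2α}}^{2α}. -/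
open MeasureTheory ENNReal

lemma aux_c_pow {α : ℝ} (hα : 1 < α) :
    (α ^ (-(1 / (α - 1)))) ^ α = α ^ (-(α / (α - 1))) := by
  have hα0 : (0:ℝ) < α := one_pos.trans hα
  rw [← Real.rpow_mul hα0.le]
  ring_nf

lemma aux_c_pow_sub_one {α : ℝ} (hα : 1 < α) :
    (α ^ (-(1 / (α - 1)))) ^ (α - 1) = α⁻¹ := by
  have hα0 : (0:ℝ) < α := one_pos.trans hα
  have h1 : α - 1 ≠ 0 := by linarith
  rw [← Real.rpow_mul hα0.le]
  have : -(1 / (α - 1)) * (α - 1) = -1 := by field_simp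
  rw [this, Real.rpow_neg_one]

lemma truncPow_nonneg {α : ℝ} (hα : 1 < α) {y : ℝ} (hy : 0 ≤ y) :
    0 ≤ truncPow α y := by
  have hα0 : (0:ℝ) < α := one_pos.trans hα
  have hc : 0 < α ^ (-(1 / (α - 1))) := Real.rpow_pos_of_pos hα0 _
  have hca : 0 ≤ α ^ (-(α / (α - 1))) := (Real.rpow_pos_of_pos hα0 _).le
  unfold truncPow
  split_ifs with h
  · exact Real.rpow_nonneg hy α
  · push_neg at h
    linarith

lemma truncPow_le {α : ℝ} (hα : 1 < α) {y : ℝ} (hy : 0 ≤ y) :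
    truncPow α y ≤ y ^ α := by
  have hα0 : (0:ℝ) < α := one_pos.trans hα
  set c : ℝ := α ^ (-(1 / (α - 1))) with hcdef
  have hc : 0 < c := Real.rpow_pos_of_pos hα0 _
  unfold truncPow
  split_ifs with h
  · exact le_refl _
  · push_neg at h
    rw [← hcdef, ← aux_c_pow hα, ← hcdef]
    have hs : (-1 : ℝ) ≤ y / c - 1 := by
      have : 1 ≤ y / c := (one_le_div hc).mpr h.le
      linarith
    have hb := one_add_mul_self_le_rpow_one_add hs hα.le
    have h1s : 1 + (y / c - 1) = y / c := by ring
    rw [h1s] at hb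
    have hdiv : (y / c) ^ α = y ^ α / c ^ α := Real.div_rpow hy hc.le α
    rw [hdiv] at hb
    have hcap : 0 < c ^ α := Real.rpow_pos_of_pos hc α
    have hb2 : (1 + α * (y / c - 1)) * c ^ α ≤ y ^ α := (le_div_iff₀ hcap).mp hb
    -- compute c^α = α⁻¹ * c
    have hca : c ^ α = α⁻¹ * c := by
      have : c ^ α = c ^ (α - 1) * c := by
        rw [← Real.rpow_add_one hc.ne' (α - 1)]; ring_nf
      rw [this, aux_c_pow_sub_one hα]
    have hexp : (1 + α * (y / c - 1)) * c ^ α = c ^ α + (y - c) := by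
      rw [hca]; field_simp
    linarith [hexp ▸ hb2]

lemma truncPowScaled_nonneg {α L : ℝ} (hα : 1 < α) (hL : 1 ≤ L) {x : ℝ} (hx : 0 ≤ x) :
    0 ≤ truncPowScaled α L x := by
  have hL0 : (0:ℝ) < L := lt_of_lt_of_le one_pos hL
  exact mul_nonneg (Real.rpow_nonneg hL0.le α)
    (truncPow_nonneg hα (div_nonneg hx hL0.le))

lemma truncPowScaled_le {α L : ℝ} (hα : 1 < α) (hL : 1 ≤ L) {x : ℝ} (hx : 0 ≤ x) :
    truncPowScaled α L x ≤ x ^ α := by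
  have hL0 : (0:ℝ) < L := lt_of_lt_of_le one_pos hL
  have h1 : truncPowScaled α L x ≤ L ^ α * (x / L) ^ α :=
    mul_le_mul_of_nonneg_left (truncPow_le hα (div_nonneg hx hL0.le))
      (Real.rpow_nonneg hL0.le α)
  have h2 : L ^ α * (x / L) ^ α = x ^ α := by
    rw [← Real.mul_rpow hL0.le (div_nonneg hx hL0.le), mul_div_cancel₀ _ hL0.ne']
  linarith
lemma truncPowScaled_eq {α L : ℝ} (hα : 1 < α) (hL : 1 ≤ L) {x : ℝ} (hx : 0 ≤ x)
    (hxL : x ≤ α ^ (-(1 / (α - 1))) * L) : truncPowScaled α L x = x ^ α := by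
  have hL0 : (0:ℝ) < L := lt_of_lt_of_le one_pos hL
  have hdiv : x / L ≤ α ^ (-(1 / (α - 1))) := by
    rw [div_le_iff₀ hL0]; linarith
  rw [truncPowScaled, truncPow, if_pos hdiv,
    ← Real.mul_rpow hL0.le (div_nonneg hx hL0.le), mul_div_cancel₀ _ hL0.ne']

lemma truncPow_measurable (α : ℝ) : Measurable (truncPow α) := by
  unfold truncPow
  exact Measurable.ite (measurableSet_le measurable_id measurable_const)
    (measurable_id.pow_const α) (measurable_id.add_const _)

lemma truncPowScaled_measurable (α L : ℝ) : Measurable (truncPowScaled α L) := by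
  unfold truncPowScaled
  exact measurable_const.mul ((truncPow_measurable α).comp (measurable_id.div_const L))

lemma eLpNorm_ofReal_eq {M : Type*} [MeasurableSpace M] (μ : Measure M)
    {f : M → ℝ} (hf : ∀ x, 0 ≤ f x) {p : ℝ≥0∞} (h0 : p ≠ 0) (ht : p ≠ ∞) :
    eLpNorm f p μ = (∫⁻ x, ENNReal.ofReal (f x) ^ p.toReal ∂μ) ^ (1 / p.toReal) := by
  rw [eLpNorm_eq_lintegral_rpow_enorm_toReal h0 ht]
  congr 1
  refine lintegral_congr fun x => ?_
  rw [← ofReal_norm, Real.norm_of_nonneg (hf x)]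

/-- **The limiting step of the Moser iteration** (from the proof of Proposition 4.3 of
Akutagawa–Carron–Mazzeo, *The Yamabe problem on Dirichlet spaces*).

Let `(M, μ)` be a measure space, `ν > 2`, `α > 1`, and let `u : M → [0,∞)` be measurable
with `u ∈ L^{2α}(μ)`. If there is `K ≥ 0` such that for every `L ≥ 1`
`‖φ_{α,L}(u)‖²_{L^{2ν/(ν−2)}} ≤ K ‖φ_{α,L}(u)‖²_{L²}`, then `u ∈ L^{2αν/(ν−2)}(μ)` and
`‖u^α‖²_{L^{2ν/(ν−2)}} ≤ K ‖u‖_{L^{2α}}^{2α}`. -/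
theorem moser_iteration_limit_step
    {M : Type*} [MeasurableSpace M] (μ : Measure M)
    (ν α : ℝ) (hν : 2 < ν) (hα : 1 < α)
    (u : M → ℝ) (hmeas : Measurable u) (hpos : ∀ x, 0 ≤ u x)
    (hu : MemLp u (ENNReal.ofReal (2 * α)) μ)
    (K : ℝ) (hK : 0 ≤ K)
    (hyp : ∀ L : ℝ, 1 ≤ L →
      (eLpNorm (fun x => truncPowScaled α L (u x)) (ENNReal.ofReal (2 * ν / (ν - 2))) μ) ^ 2
        ≤ ENNReal.ofReal K
          * (eLpNorm (fun x => truncPowScaled α L (u x)) 2 μ) ^ 2) :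
    MemLp u (ENNReal.ofReal (2 * α * ν / (ν - 2))) μ ∧
    (eLpNorm (fun x => u x ^ α) (ENNReal.ofReal (2 * ν / (ν - 2))) μ) ^ 2
      ≤ ENNReal.ofReal K * (eLpNorm u (ENNReal.ofReal (2 * α)) μ) ^ (2 * α) := by
  have hα0 : (0:ℝ) < α := one_pos.trans hα
  have hν2 : (0:ℝ) < ν - 2 := by linarith
  set q : ℝ := 2 * ν / (ν - 2) with hqdef
  have hq0 : 0 < q := div_pos (by linarith) hν2
  have hQ0 : ENNReal.ofReal q ≠ 0 := by
    simp only [ne_eq, ENNReal.ofReal_eq_zero, not_le]; exact hq0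
  have hQt : ENNReal.ofReal q ≠ ∞ := ofReal_ne_top
  have hQr : (ENNReal.ofReal q).toReal = q := ENNReal.toReal_ofReal hq0.le
  have h2α0 : (0:ℝ) < 2 * α := by linarith
  have hP0 : ENNReal.ofReal (2 * α) ≠ 0 := by
    simp only [ne_eq, ENNReal.ofReal_eq_zero, not_le]; exact h2α0
  have hPt : ENNReal.ofReal (2 * α) ≠ ∞ := ofReal_ne_top
  have hPr : (ENNReal.ofReal (2 * α)).toReal = 2 * α := ENNReal.toReal_ofReal h2α0.le
  set I : ℝ≥0∞ := ∫⁻ x, ENNReal.ofReal (u x) ^ (2 * α) ∂μ with hIdef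
  have huα_nonneg : ∀ x, 0 ≤ u x ^ α := fun x => Real.rpow_nonneg (hpos x) α
  have hofu : ∀ x, ENNReal.ofReal (u x ^ α) = ENNReal.ofReal (u x) ^ α :=
    fun x => (ENNReal.ofReal_rpow_of_nonneg (hpos x) hα0.le).symm
  have hEu : eLpNorm u (ENNReal.ofReal (2 * α)) μ = I ^ (1 / (2 * α)) := by
    rw [eLpNorm_ofReal_eq μ hpos hP0 hPt, hPr]
  have hB : eLpNorm (fun x => u x ^ α) 2 μ = I ^ ((1:ℝ) / 2) := by
    rw [eLpNorm_ofReal_eq μ huα_nonneg two_ne_zero ofNat_ne_top, ENNReal.toReal_ofNat]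
    congr 1
    refine lintegral_congr fun x => ?_
    rw [hofu x, ← ENNReal.rpow_mul]
    congr 1; ring
  have hB2 : (eLpNorm (fun x => u x ^ α) 2 μ) ^ 2 = I := by
    rw [hB, ← ENNReal.rpow_natCast (I ^ ((1:ℝ)/2)) 2, ← ENNReal.rpow_mul]
    norm_num
  have hEupow : (eLpNorm u (ENNReal.ofReal (2 * α)) μ) ^ (2 * α) = I := by
    rw [hEu, ← ENNReal.rpow_mul, one_div, inv_mul_cancel₀ h2α0.ne', ENNReal.rpow_one]
  set C : ℝ≥0∞ := ENNReal.ofReal K * I with hCdef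
  have hbound : ∀ L : ℝ, 1 ≤ L →
      (∫⁻ x, ENNReal.ofReal (truncPowScaled α L (u x)) ^ q ∂μ) ≤ C ^ (q / 2) := by
    intro L hL
    have hφpos : ∀ x, 0 ≤ truncPowScaled α L (u x) :=
      fun x => truncPowScaled_nonneg hα hL (hpos x)
    have hEφ : eLpNorm (fun x => truncPowScaled α L (u x)) (ENNReal.ofReal q) μ
        = (∫⁻ x, ENNReal.ofReal (truncPowScaled α L (u x)) ^ q ∂μ) ^ (1 / q) := by
      rw [eLpNorm_ofReal_eq μ hφpos hQ0 hQt, hQr]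
    have hA : (∫⁻ x, ENNReal.ofReal (truncPowScaled α L (u x)) ^ q ∂μ)
        = (eLpNorm (fun x => truncPowScaled α L (u x)) (ENNReal.ofReal q) μ) ^ (q : ℝ) := by
      rw [hEφ, ← ENNReal.rpow_mul, one_div, inv_mul_cancel₀ hq0.ne', ENNReal.rpow_one]
    have h2 : eLpNorm (fun x => truncPowScaled α L (u x)) 2 μ
        ≤ eLpNorm (fun x => u x ^ α) 2 μ :=
      eLpNorm_mono fun x => by
        rw [Real.norm_of_nonneg (hφpos x), Real.norm_of_nonneg (huα_nonneg x)]
        exact truncPowScaled_le hα hL (hpos x)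
    have h3 : (eLpNorm (fun x => truncPowScaled α L (u x)) (ENNReal.ofReal q) μ) ^ 2 ≤ C := by
      calc (eLpNorm (fun x => truncPowScaled α L (u x)) (ENNReal.ofReal q) μ) ^ 2
          ≤ ENNReal.ofReal K * (eLpNorm (fun x => truncPowScaled α L (u x)) 2 μ) ^ 2 :=
            hyp L hL
        _ ≤ ENNReal.ofReal K * (eLpNorm (fun x => u x ^ α) 2 μ) ^ 2 :=
            mul_le_mul_right (pow_le_pow_left' h2 2) _
        _ = C := by rw [hB2]
    calc (∫⁻ x, ENNReal.ofReal (truncPowScaled α L (u x)) ^ q ∂μ)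
        = (eLpNorm (fun x => truncPowScaled α L (u x)) (ENNReal.ofReal q) μ) ^ (q : ℝ) := hA
      _ = ((eLpNorm (fun x => truncPowScaled α L (u x)) (ENNReal.ofReal q) μ) ^ 2)
            ^ (q / 2 : ℝ) := by
          rw [← ENNReal.rpow_natCast _ 2, ← ENNReal.rpow_mul]
          congr 1
          push_cast
          ring
      _ ≤ C ^ (q / 2 : ℝ) := ENNReal.rpow_le_rpow h3 (by positivity)
  -- Fatou
  set c : ℝ := α ^ (-(1 / (α - 1))) with hcdef
  have hc : 0 < c := Real.rpow_pos_of_pos hα0 _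
  have hfatou : (∫⁻ x, ENNReal.ofReal (u x ^ α) ^ q ∂μ) ≤ C ^ (q / 2) := by
    have hptwise : ∀ x : M, Filter.Tendsto
        (fun n : ℕ => ENNReal.ofReal (truncPowScaled α ((n : ℝ) + 1) (u x)) ^ q)
        Filter.atTop (nhds (ENNReal.ofReal (u x ^ α) ^ q)) := by
      intro x
      apply tendsto_atTop_of_eventually_const (i₀ := ⌈u x / c⌉₊)
      intro n hn
      have h1L : (1:ℝ) ≤ (n : ℝ) + 1 := by
        have := Nat.cast_nonneg (α := ℝ) n; linarith
      have hxL : u x ≤ c * ((n : ℝ) + 1) := by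
        have h1 : u x / c ≤ (n : ℝ) :=
          le_trans (Nat.le_ceil _) (Nat.cast_le.mpr hn)
        have h2 : u x ≤ (n : ℝ) * c := (div_le_iff₀ hc).mp h1
        nlinarith
      rw [truncPowScaled_eq hα h1L (hpos x) hxL]
    have hliminf : (∫⁻ x, ENNReal.ofReal (u x ^ α) ^ q ∂μ)
        = ∫⁻ x, Filter.liminf
            (fun n : ℕ => ENNReal.ofReal (truncPowScaled α ((n : ℝ) + 1) (u x)) ^ q)
            Filter.atTop ∂μ :=
      lintegral_congr fun x => ((hptwise x).liminf_eq).symm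
    rw [hliminf]
    refine le_trans (lintegral_liminf_le fun n => ?_) ?_
    · exact (((truncPowScaled_measurable α _).comp hmeas).ennreal_ofReal).pow_const q
    · refine le_trans (Filter.liminf_le_liminf (Filter.Eventually.of_forall fun n =>
        hbound ((n : ℝ) + 1) (by
          have := Nat.cast_nonneg (α := ℝ) n; linarith))) ?_
      simp [Filter.liminf_const]
  have hEuα : eLpNorm (fun x => u x ^ α) (ENNReal.ofReal q) μ
      = (∫⁻ x, ENNReal.ofReal (u x ^ α) ^ q ∂μ) ^ (1 / q) := by
    rw [eLpNorm_ofReal_eq μ huα_nonneg hQ0 hQt, hQr]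
  have hfinal : (eLpNorm (fun x => u x ^ α) (ENNReal.ofReal q) μ) ^ 2 ≤ C := by
    have h1 : (eLpNorm (fun x => u x ^ α) (ENNReal.ofReal q) μ) ^ 2
        = (∫⁻ x, ENNReal.ofReal (u x ^ α) ^ q ∂μ) ^ (2 / q : ℝ) := by
      rw [hEuα, ← ENNReal.rpow_natCast _ 2, ← ENNReal.rpow_mul]
      congr 1
      push_cast
      ring
    have h2 := ENNReal.rpow_le_rpow hfatou (by positivity : (0:ℝ) ≤ 2 / q)
    rw [← ENNReal.rpow_mul] at h2
    have h3 : q / 2 * (2 / q) = 1 := by field_simp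
    rw [h3, ENNReal.rpow_one] at h2
    rw [h1]; exact h2
  have hIlt : I < ∞ := by
    rw [← hEupow]
    exact ENNReal.rpow_lt_top_of_nonneg h2α0.le hu.2.ne
  have hClt : C < ∞ :=
    ENNReal.mul_lt_top ofReal_lt_top hIlt
  constructor
  · -- Memℒp
    have hr0 : 0 < 2 * α * ν / (ν - 2) := div_pos (by nlinarith) hν2
    have hR0 : ENNReal.ofReal (2 * α * ν / (ν - 2)) ≠ 0 := by
      simp only [ne_eq, ENNReal.ofReal_eq_zero, not_le]; exact hr0
    have hRt : ENNReal.ofReal (2 * α * ν / (ν - 2)) ≠ ∞ := ofReal_ne_top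
    have hRr : (ENNReal.ofReal (2 * α * ν / (ν - 2))).toReal = 2 * α * ν / (ν - 2) :=
      ENNReal.toReal_ofReal hr0.le
    have hαq : α * q = 2 * α * ν / (ν - 2) := by rw [hqdef]; ring
    have hJeq : (∫⁻ x, ENNReal.ofReal (u x) ^ (2 * α * ν / (ν - 2)) ∂μ)
        = ∫⁻ x, ENNReal.ofReal (u x ^ α) ^ q ∂μ :=
      lintegral_congr fun x => by
        rw [hofu x, ← ENNReal.rpow_mul, hαq]
    refine ⟨hmeas.aestronglyMeasurable, ?_⟩
    rw [eLpNorm_ofReal_eq μ hpos hR0 hRt, hRr, hJeq]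
    have hJlt : (∫⁻ x, ENNReal.ofReal (u x ^ α) ^ q ∂μ) < ∞ :=
      lt_of_le_of_lt hfatou (ENNReal.rpow_lt_top_of_nonneg (by positivity) hClt.ne)
    exact ENNReal.rpow_lt_top_of_nonneg (by positivity) hJlt.ne
  · rw [hEupow]
    exact hfinal
end

section
/- Let (X,d) be a metric space, μ a Borel measure on X, p ∈ X, and let ν > 2, α ∈ [0,2), Λ ≥ 0, R > 0. Let f : X → ℝ be measurable and assume the Morrey bound ∫_{B(p,r)} |f| dμ ≤ Λ·r^{ν−α} for every r ∈ (0,R]. Then ∫_{B(p,R)} d(p,y)^{2−ν}·|f(y)| dμ(y) ≤ (1 + (ν−2)/(2−α))·Λ·R^{2−α}. -/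
open MeasureTheory ENNReal

/-- **Near estimate for the Green-kernel singularity under a Morrey bound** (from the
proof of Theorem 4.2 of Akutagawa–Carron–Mazzeo, *The Yamabe problem on Dirichlet
spaces*).

Let `(X,d)` be a metric space with a Borel measure `μ`, `p ∈ X`, `ν > 2`, `α ∈ [0,2)`,
`Λ ≥ 0`, `R > 0`, and let `f` be measurable with `∫_{B(p,r)} |f| dμ ≤ Λ r^{ν−α}` for
every `r ∈ (0,R]`. Then
`∫_{B(p,R)} d(p,y)^{2−ν} |f(y)| dμ(y) ≤ (1 + (ν−2)/(2−α)) Λ R^{2−α}`. -/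
theorem green_kernel_near_estimate
    {X : Type*} [MetricSpace X] [MeasurableSpace X] [BorelSpace X]
    (μ : Measure X) (p : X)
    (ν α Λ R : ℝ) (hν : 2 < ν) (hα : α ∈ Set.Ico (0 : ℝ) 2) (hΛ : 0 ≤ Λ) (hR : 0 < R)
    (f : X → ℝ) (hf : Measurable f)
    (hMorrey : ∀ r : ℝ, 0 < r → r ≤ R →
      (∫⁻ y in Metric.ball p r, ENNReal.ofReal |f y| ∂μ)
        ≤ ENNReal.ofReal (Λ * r ^ (ν - α))) :
    (∫⁻ y in Metric.ball p R, ENNReal.ofReal (dist p y ^ (2 - ν) * |f y|) ∂μ)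
      ≤ ENNReal.ofReal ((1 + (ν - 2) / (2 - α)) * Λ * R ^ (2 - α)) := by
  obtain ⟨hα0, hα2⟩ := hα
  have h2α : (0:ℝ) < 2 - α := by linarith
  have hν2 : (0:ℝ) < ν - 2 := by linarith
  set s := Metric.ball p R with hs
  set g : X → ℝ≥0∞ := fun y => ENNReal.ofReal |f y| with hg
  have hgm : Measurable g := hf.abs.ennreal_ofReal
  set K : X → ℝ≥0∞ := fun y => ENNReal.ofReal (dist p y ^ (2 - ν)) with hK
  have hKm : Measurable K :=
    (((continuous_const.dist continuous_id).measurable).pow measurable_const).ennreal_ofReal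
  set μ' := μ.restrict s with hμ'
  set τ := μ'.withDensity g with hτ
  have hτuniv : τ Set.univ ≤ ENNReal.ofReal (Λ * R ^ (ν - α)) := by
    rw [hτ, withDensity_apply _ MeasurableSet.univ, Measure.restrict_univ]
    exact hMorrey R hR le_rfl
  have hτfin : IsFiniteMeasure τ :=
    isFiniteMeasure_withDensity ((hMorrey R hR le_rfl).trans_lt ofReal_lt_top).ne
  have hτball : ∀ r : ℝ, 0 < r → r ≤ R →
      τ (Metric.ball p r) ≤ ENNReal.ofReal (Λ * r ^ (ν - α)) := by
    intro r hr hrR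
    rw [hτ, withDensity_apply _ measurableSet_ball, hμ',
      Measure.restrict_restrict measurableSet_ball,
      Set.inter_eq_left.2 (Metric.ball_subset_ball hrR)]
    exact hMorrey r hr hrR
  have h1 : (∫⁻ y in Metric.ball p R, ENNReal.ofReal (dist p y ^ (2 - ν) * |f y|) ∂μ)
      = ∫⁻ y, K y ∂τ := by
    rw [hτ, lintegral_withDensity_eq_lintegral_mul μ' hgm hKm]
    refine lintegral_congr fun y => ?_
    simp only [Pi.mul_apply, hK, hg]
    rw [ENNReal.ofReal_mul (Real.rpow_nonneg dist_nonneg _), mul_comm]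
  rw [h1]
  set ρ : Measure ℝ := volume.restrict (Set.Ioc (0:ℝ) R) with hρ
  set H : X → ℝ → ℝ≥0∞ := fun y r =>
    (Set.Ioi (dist p y)).indicator (fun t => ENNReal.ofReal (t ^ (1 - ν))) r with hH
  have hHm : Measurable (Function.uncurry H) := by
    have heq : Function.uncurry H =
        {q : X × ℝ | dist p q.1 < q.2}.indicator
          (fun q => ENNReal.ofReal (q.2 ^ (1 - ν))) := by
      funext q
      rcases q with ⟨y, r⟩
      by_cases hc : dist p y < r <;>
        simp [Function.uncurry, hH, Set.indicator, hc]
    rw [heq]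
    have hopen : IsOpen {q : X × ℝ | dist p q.1 < q.2} :=
      isOpen_lt (continuous_const.dist continuous_fst) continuous_snd
    exact ((measurable_snd.pow measurable_const).ennreal_ofReal).indicator
      hopen.measurableSet
  have hFm : Measurable fun y => ∫⁻ r, H y r ∂ρ := hHm.lintegral_prod_right
  -- pointwise key estimate
  have key : ∀ᵐ y ∂τ, K y ≤ ENNReal.ofReal (R ^ (2 - ν)) +
      ENNReal.ofReal (ν - 2) * ∫⁻ r, H y r ∂ρ := by
    have hball : ∀ᵐ y ∂τ, y ∈ s :=
      (ae_restrict_mem measurableSet_ball).filter_mono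
        (withDensity_absolutelyContinuous μ' g).ae_le
    filter_upwards [hball] with y hy
    have hdR : dist p y < R := by rwa [dist_comm, ← Metric.mem_ball]
    rcases eq_or_lt_of_le (dist_nonneg : 0 ≤ dist p y) with hd0 | hd0
    · have : dist p y ^ (2 - ν) = 0 := by
        rw [← hd0, Real.zero_rpow (by intro h; linarith [h] : (2:ℝ) - ν ≠ 0)]
      simp [hK, this]
    · set d := dist p y with hd
      -- compute the inner lintegral
      have hint : ∫⁻ r, H y r ∂ρ
          = ENNReal.ofReal ((R ^ (2 - ν) - d ^ (2 - ν)) / (2 - ν)) := by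
        rw [hρ, hH]
        rw [lintegral_indicator measurableSet_Ioi,
          Measure.restrict_restrict measurableSet_Ioi]
        have hset : Set.Ioi d ∩ Set.Ioc 0 R = Set.Ioc d R := by
          ext r
          simp only [Set.mem_inter_iff, Set.mem_Ioi, Set.mem_Ioc]
          constructor
          · rintro ⟨h1, _, h3⟩; exact ⟨h1, h3⟩
          · rintro ⟨h1, h3⟩; exact ⟨h1, lt_trans hd0 h1, h3⟩
        rw [hset]
        have hInt : IntegrableOn (fun r : ℝ => r ^ (1 - ν)) (Set.Ioc d R) volume := by
          have h0 : (0:ℝ) ∉ Set.uIcc d R := by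
            rw [Set.uIcc_of_le hdR.le, Set.mem_Icc]
            rintro ⟨h1, _⟩; linarith
          exact (intervalIntegral.intervalIntegrable_rpow (Or.inr h0)).1
        have hnn : 0 ≤ᵐ[volume.restrict (Set.Ioc d R)] fun r : ℝ => r ^ (1 - ν) := by
          filter_upwards [ae_restrict_mem measurableSet_Ioc] with r hr
          exact Real.rpow_nonneg (le_of_lt (lt_trans hd0 hr.1)) _
        rw [← ofReal_integral_eq_lintegral_ofReal hInt hnn]
        congr 1
        rw [← intervalIntegral.integral_of_le hdR.le]
        rw [integral_rpow (Or.inr ⟨by intro h; linarith [h], by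
          rw [Set.uIcc_of_le hdR.le, Set.mem_Icc]; rintro ⟨h1, _⟩; linarith⟩)]
        have he : (1:ℝ) - ν + 1 = 2 - ν := by ring
        rw [he]
      rw [hint]
      have hsub : 0 ≤ d ^ (2 - ν) - R ^ (2 - ν) :=
        sub_nonneg.2 (Real.rpow_le_rpow_of_nonpos hd0 hdR.le (by linarith))
      rw [← ENNReal.ofReal_mul (by linarith : (0:ℝ) ≤ ν - 2)]
      have h2ν : (2:ℝ) - ν ≠ 0 := by linarith
      have hval : (ν - 2) * ((R ^ (2 - ν) - d ^ (2 - ν)) / (2 - ν))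
          = d ^ (2 - ν) - R ^ (2 - ν) := by
        field_simp
        ring
      rw [hval, ← ENNReal.ofReal_add (Real.rpow_nonneg hR.le _) hsub]
      have : R ^ (2 - ν) + (d ^ (2 - ν) - R ^ (2 - ν)) = d ^ (2 - ν) := by ring
      rw [this]
  -- inner estimate for each r
  have inner : ∀ r : ℝ, 0 < r → r ≤ R →
      (∫⁻ y, H y r ∂τ) ≤ ENNReal.ofReal (Λ * r ^ (1 - α)) := by
    intro r hr hrR
    have heq : (fun y => H y r)
        = (Metric.ball p r).indicator (fun _ => ENNReal.ofReal (r ^ (1 - ν))) := by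
      funext y
      by_cases hc : dist p y < r <;>
        simp [hH, Set.indicator, Metric.mem_ball, dist_comm, hc]
    rw [heq, lintegral_indicator measurableSet_ball, setLIntegral_const]
    calc ENNReal.ofReal (r ^ (1 - ν)) * τ (Metric.ball p r)
        ≤ ENNReal.ofReal (r ^ (1 - ν)) * ENNReal.ofReal (Λ * r ^ (ν - α)) := by
          gcongr; exact hτball r hr hrR
      _ = ENNReal.ofReal (Λ * r ^ (1 - α)) := by
          rw [← ENNReal.ofReal_mul (Real.rpow_nonneg hr.le _)]
          congr 1
          rw [← mul_assoc, mul_comm (r ^ ((1:ℝ) - ν)) Λ, mul_assoc,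
            ← Real.rpow_add hr]
          congr 2
          ring
  -- the outer r-integral
  have outer : (∫⁻ r, ENNReal.ofReal (Λ * r ^ (1 - α)) ∂ρ)
      = ENNReal.ofReal (Λ * (R ^ (2 - α) / (2 - α))) := by
    rw [hρ]
    have hInt : IntegrableOn (fun r : ℝ => Λ * r ^ (1 - α)) (Set.Ioc 0 R) volume :=
      ((intervalIntegral.intervalIntegrable_rpow' (by linarith)).const_mul Λ).1
    have hnn : 0 ≤ᵐ[volume.restrict (Set.Ioc (0:ℝ) R)] fun r : ℝ => Λ * r ^ (1 - α) := by
      filter_upwards [ae_restrict_mem measurableSet_Ioc] with r hr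
      exact mul_nonneg hΛ (Real.rpow_nonneg hr.1.le _)
    rw [← ofReal_integral_eq_lintegral_ofReal hInt hnn]
    congr 1
    rw [← intervalIntegral.integral_of_le hR.le, intervalIntegral.integral_const_mul,
      integral_rpow (Or.inl (by linarith))]
    have he : (1:ℝ) - α + 1 = 2 - α := by ring
    rw [he, Real.zero_rpow (ne_of_gt h2α)]
    ring_nf
  -- main calculation
  calc ∫⁻ y, K y ∂τ
      ≤ ∫⁻ y, (ENNReal.ofReal (R ^ (2 - ν)) +
          ENNReal.ofReal (ν - 2) * ∫⁻ r, H y r ∂ρ) ∂τ := lintegral_mono_ae key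
    _ = ENNReal.ofReal (R ^ (2 - ν)) * τ Set.univ +
          ENNReal.ofReal (ν - 2) * ∫⁻ y, (∫⁻ r, H y r ∂ρ) ∂τ := by
        rw [lintegral_add_left measurable_const, lintegral_const,
          lintegral_const_mul _ hFm]
    _ = ENNReal.ofReal (R ^ (2 - ν)) * τ Set.univ +
          ENNReal.ofReal (ν - 2) * ∫⁻ r, (∫⁻ y, H y r ∂τ) ∂ρ := by
        rw [lintegral_lintegral_swap hHm.aemeasurable]
    _ ≤ ENNReal.ofReal (R ^ (2 - ν)) * ENNReal.ofReal (Λ * R ^ (ν - α)) +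
          ENNReal.ofReal (ν - 2) * ∫⁻ r, ENNReal.ofReal (Λ * r ^ (1 - α)) ∂ρ := by
        refine add_le_add (mul_le_mul_right hτuniv _) (mul_le_mul_right ?_ _)
        refine lintegral_mono_ae ?_
        filter_upwards [ae_restrict_mem measurableSet_Ioc] with r hr
        exact inner r hr.1 hr.2
    _ = ENNReal.ofReal ((1 + (ν - 2) / (2 - α)) * Λ * R ^ (2 - α)) := by
        rw [outer, ← ENNReal.ofReal_mul (Real.rpow_nonneg hR.le _),
          ← ENNReal.ofReal_mul (by linarith : (0:ℝ) ≤ ν - 2),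
          ← ENNReal.ofReal_add
            (mul_nonneg (Real.rpow_nonneg hR.le _)
              (mul_nonneg hΛ (Real.rpow_nonneg hR.le _)))
            (mul_nonneg (by linarith)
              (mul_nonneg hΛ (div_nonneg (Real.rpow_nonneg hR.le _) h2α.le)))]
        congr 1
        have hRpow : R ^ ((2:ℝ) - ν) * (Λ * R ^ (ν - α)) = Λ * R ^ ((2:ℝ) - α) := by
          rw [mul_comm Λ (R ^ (ν - α)), ← mul_assoc, ← Real.rpow_add hR, mul_comm]
          congr 2
          ring
        rw [hRpow]
        field_simp
end

section
/- Let (X,d) be a metric space, μ a Borel measure on X, p ∈ X, and let ν > 2, α ∈ [0,2), β > 0 with α + β > 2, Λ ≥ 0, R > 0. Let f : X → ℝ be measurable and assume the Morrey bound ∫_{B(p,r)} |f| dμ ≤ Λ·r^{ν−α} for every r > 0. Then ∫_{X ∖ B(p,R)} d(p,y)^{−(ν−2+β)}·|f(y)| dμ(y) ≤ C·Λ·R^{2−α−β}, where C is a constant depending only on ν, α and β (one may take C = 1 + (ν−2+β)/(α+β−2)). -/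
open MeasureTheory ENNReal

/-- Lintegral of a power function on a tail interval. -/
lemma lintegral_Ioi_ofReal_rpow {q c : ℝ} (hq : q < -1) (hc : 0 < c) :
    ∫⁻ t in Set.Ioi c, ENNReal.ofReal (t ^ q) = ENNReal.ofReal (c ^ (q + 1) / (-(q + 1))) := by
  rw [← ofReal_integral_eq_lintegral_ofReal (integrableOn_Ioi_rpow_of_lt hq hc) ?_]
  · rw [integral_Ioi_rpow_of_lt hq hc]
    congr 1
    rw [div_neg, neg_div]
  · filter_upwards [ae_restrict_mem measurableSet_Ioi] with t ht
    exact Real.rpow_nonneg (hc.trans ht).le _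

/-- **Tail estimate for the Hölder-continuity kernel under a Morrey bound** (from the
proof of Theorem 4.2 of Akutagawa–Carron–Mazzeo, *The Yamabe problem on Dirichlet
spaces*).

Let `(X,d)` be a metric space with a Borel measure `μ`, `p ∈ X`, `ν > 2`, `α ∈ [0,2)`,
`β > 0` with `α + β > 2`, `Λ ≥ 0`, `R > 0`, and let `f` be measurable with
`∫_{B(p,r)} |f| dμ ≤ Λ r^{ν−α}` for every `r > 0`. Then
`∫_{X ∖ B(p,R)} d(p,y)^{−(ν−2+β)} |f(y)| dμ(y) ≤ C Λ R^{2−α−β}` with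
`C = 1 + (ν−2+β)/(α+β−2)`, a constant depending only on `ν`, `α` and `β`. -/
theorem green_kernel_tail_estimate
    {X : Type*} [MetricSpace X] [MeasurableSpace X] [BorelSpace X]
    (μ : Measure X) (p : X)
    (ν α β Λ R : ℝ) (hν : 2 < ν) (hα : α ∈ Set.Ico (0 : ℝ) 2) (hβ : 0 < β)
    (hαβ : 2 < α + β) (hΛ : 0 ≤ Λ) (hR : 0 < R)
    (f : X → ℝ) (hf : Measurable f)
    (hMorrey : ∀ r : ℝ, 0 < r →
      (∫⁻ y in Metric.ball p r, ENNReal.ofReal |f y| ∂μ)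
        ≤ ENNReal.ofReal (Λ * r ^ (ν - α))) :
    (∫⁻ y in (Metric.ball p R)ᶜ, ENNReal.ofReal (dist p y ^ (-(ν - 2 + β)) * |f y|) ∂μ)
      ≤ ENNReal.ofReal ((1 + (ν - 2 + β) / (α + β - 2)) * Λ * R ^ (2 - α - β)) := by
  have hspos : 0 < ν - 2 + β := by linarith
  have hεpos : 0 < α + β - 2 := by linarith
  -- the density measure
  set w : X → ℝ≥0∞ := fun y => ENNReal.ofReal |f y| with hw_def
  have hw : Measurable w := hf.abs.ennreal_ofReal
  set νm : Measure X := μ.withDensity w with hνm_def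
  have hνball : ∀ r : ℝ, 0 < r → νm (Metric.ball p r) ≤ ENNReal.ofReal (Λ * r ^ (ν - α)) := by
    intro r hr
    rw [hνm_def, withDensity_apply _ measurableSet_ball]
    exact hMorrey r hr
  have hsf : SigmaFinite νm := by
    refine ⟨⟨⟨fun n => Metric.ball p (n + 1), fun _ => trivial, fun n => ?_, ?_⟩⟩⟩
    · exact lt_of_le_of_lt (hνball (n + 1) (by positivity)) ofReal_lt_top
    · rw [Set.iUnion_eq_univ_iff]
      intro x
      refine ⟨⌈dist x p⌉₊, ?_⟩
      rw [Metric.mem_ball]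
      exact lt_of_le_of_lt (Nat.le_ceil _) (lt_add_one _)
  -- measurability of the distance function
  have hdist : Measurable fun y : X => dist p y :=
    (continuous_const.dist continuous_id).measurable
  have hg : Measurable fun y : X => ENNReal.ofReal (dist p y ^ (-(ν - 2 + β))) :=
    (hdist.pow measurable_const).ennreal_ofReal
  have hmero : ∀ e : ℝ, Measurable fun t : ℝ => ENNReal.ofReal (t ^ e) := fun e =>
    (measurable_id.pow measurable_const).ennreal_ofReal
  -- rewrite LHS as an integral against νm
  have hL : (∫⁻ y in (Metric.ball p R)ᶜ, ENNReal.ofReal (dist p y ^ (-(ν - 2 + β)) * |f y|) ∂μ)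
      = ∫⁻ y in (Metric.ball p R)ᶜ, ENNReal.ofReal (dist p y ^ (-(ν - 2 + β))) ∂νm := by
    rw [hνm_def, restrict_withDensity measurableSet_ball.compl,
      lintegral_withDensity_eq_lintegral_mul _ hw hg]
    refine lintegral_congr fun y => ?_
    simp only [Pi.mul_apply, hw_def]
    rw [← ENNReal.ofReal_mul (abs_nonneg _), mul_comm]
  rw [hL]
  -- the kernel function
  set c : ℝ → ℝ≥0∞ := fun t => ENNReal.ofReal ((ν - 2 + β) * t ^ (-(ν - 2 + β) - 1)) with hc_def
  have hc : Measurable c := (measurable_const.mul (measurable_id.pow measurable_const)).ennreal_ofReal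
  -- pointwise layer-cake identity
  have key : ∀ y ∈ (Metric.ball p R)ᶜ,
      ENNReal.ofReal (dist p y ^ (-(ν - 2 + β)))
        = ∫⁻ t in Set.Ioi R, (Set.Ioi (dist p y)).indicator c t := by
    intro y hy
    have hd : R ≤ dist p y := by
      rw [Set.mem_compl_iff, Metric.mem_ball, not_lt, dist_comm] at hy
      exact hy
    have hd0 : 0 < dist p y := hR.trans_le hd
    rw [lintegral_indicator measurableSet_Ioi, Measure.restrict_restrict measurableSet_Ioi,
      Set.inter_eq_left.mpr (Set.Ioi_subset_Ioi hd)]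
    have : ∫⁻ t in Set.Ioi (dist p y), c t
        = ENNReal.ofReal (ν - 2 + β) * ∫⁻ t in Set.Ioi (dist p y),
            ENNReal.ofReal (t ^ (-(ν - 2 + β) - 1)) := by
      rw [← lintegral_const_mul _ (hmero (-(ν - 2 + β) - 1))]
      refine lintegral_congr fun t => ?_
      simp only [hc_def, ENNReal.ofReal_mul hspos.le]
    rw [this, lintegral_Ioi_ofReal_rpow (by linarith) hd0,
      ← ENNReal.ofReal_mul hspos.le]
    congr 1
    rw [show -(ν - 2 + β) - 1 + 1 = -(ν - 2 + β) by ring]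
    rw [show -(-(ν - 2 + β)) = ν - 2 + β by ring]
    field_simp
  rw [setLIntegral_congr_fun measurableSet_ball.compl
    key]
  -- swap the order of integration (Tonelli)
  have hswap : (∫⁻ y in (Metric.ball p R)ᶜ, ∫⁻ t in Set.Ioi R,
        (Set.Ioi (dist p y)).indicator c t ∂(volume : Measure ℝ) ∂νm)
      = ∫⁻ t in Set.Ioi R, ∫⁻ y in (Metric.ball p R)ᶜ,
        (Set.Ioi (dist p y)).indicator c t ∂νm ∂(volume : Measure ℝ) := by
    refine lintegral_lintegral_swap ?_
    have heq : (Function.uncurry fun (y : X) (t : ℝ) => (Set.Ioi (dist p y)).indicator c t)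
        = fun q : X × ℝ => ({q : X × ℝ | dist p q.1 < q.2}).indicator (fun q => c q.2) q := by
      funext q
      simp [Function.uncurry, Set.indicator_apply, Set.mem_Ioi]
    refine (Measurable.aemeasurable ?_)
    rw [heq]
    exact (hc.comp measurable_snd).indicator
      (isOpen_lt ((continuous_const.dist continuous_id).comp continuous_fst)
        continuous_snd).measurableSet
  rw [hswap]
  -- bound the inner integral using the Morrey assumption
  have hinner : ∀ t ∈ Set.Ioi R,
      (∫⁻ y in (Metric.ball p R)ᶜ, (Set.Ioi (dist p y)).indicator c t ∂νm)
        ≤ c t * ENNReal.ofReal (Λ * t ^ (ν - α)) := by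
    intro t ht
    have hind : ∀ y : X, (Set.Ioi (dist p y)).indicator c t
        = (Metric.ball p t).indicator (fun _ => c t) y := by
      intro y
      by_cases h : dist p y < t <;>
        simp [Set.indicator_apply, Metric.mem_ball, dist_comm y p, h]
    calc (∫⁻ y in (Metric.ball p R)ᶜ, (Set.Ioi (dist p y)).indicator c t ∂νm)
        = ∫⁻ y in (Metric.ball p R)ᶜ, (Metric.ball p t).indicator (fun _ => c t) y ∂νm := by
          exact lintegral_congr fun y => by rw [hind y]
      _ ≤ ∫⁻ y, (Metric.ball p t).indicator (fun _ => c t) y ∂νm :=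
          setLIntegral_le_lintegral _ _
      _ = c t * νm (Metric.ball p t) := by
          rw [lintegral_indicator measurableSet_ball, setLIntegral_const]
      _ ≤ c t * ENNReal.ofReal (Λ * t ^ (ν - α)) :=
          mul_le_mul_right (hνball t (hR.trans ht)) _
  calc (∫⁻ t in Set.Ioi R, ∫⁻ y in (Metric.ball p R)ᶜ,
        (Set.Ioi (dist p y)).indicator c t ∂νm ∂(volume : Measure ℝ))
      ≤ ∫⁻ t in Set.Ioi R, c t * ENNReal.ofReal (Λ * t ^ (ν - α)) ∂(volume : Measure ℝ) := by
        refine lintegral_mono_ae ?_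
        filter_upwards [ae_restrict_mem measurableSet_Ioi] with t ht
        exact hinner t ht
    _ = ∫⁻ t in Set.Ioi R,
          ENNReal.ofReal ((ν - 2 + β) * Λ) * ENNReal.ofReal (t ^ (1 - α - β))
          ∂(volume : Measure ℝ) := by
        refine setLIntegral_congr_fun measurableSet_Ioi ?_
        intro t ht
        have ht0 : 0 < t := hR.trans ht
        have h2 : (ν - 2 + β) * t ^ (-(ν - 2 + β) - 1) * (Λ * t ^ (ν - α))
            = (ν - 2 + β) * Λ * t ^ (1 - α - β) := by
          rw [show (ν - 2 + β) * t ^ (-(ν - 2 + β) - 1) * (Λ * t ^ (ν - α))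
              = (ν - 2 + β) * Λ * (t ^ (-(ν - 2 + β) - 1) * t ^ (ν - α)) by ring,
            ← Real.rpow_add ht0, show -(ν - 2 + β) - 1 + (ν - α) = 1 - α - β by ring]
        beta_reduce
        rw [hc_def, ← ENNReal.ofReal_mul
            (mul_nonneg hspos.le (Real.rpow_nonneg ht0.le _)), h2,
          ENNReal.ofReal_mul (mul_nonneg hspos.le hΛ)]
    _ = ENNReal.ofReal ((ν - 2 + β) * Λ) * ∫⁻ t in Set.Ioi R,
          ENNReal.ofReal (t ^ (1 - α - β)) ∂(volume : Measure ℝ) := by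
        rw [lintegral_const_mul _ (hmero (1 - α - β))]
    _ = ENNReal.ofReal ((ν - 2 + β) * Λ) * ENNReal.ofReal (R ^ (2 - α - β) / (α + β - 2)) := by
        rw [lintegral_Ioi_ofReal_rpow (by linarith) hR]
        congr 1
        rw [show (1 : ℝ) - α - β + 1 = 2 - α - β by ring,
          show -((2 : ℝ) - α - β) = α + β - 2 by ring]
    _ ≤ ENNReal.ofReal ((1 + (ν - 2 + β) / (α + β - 2)) * Λ * R ^ (2 - α - β)) := by
        rw [← ENNReal.ofReal_mul (by positivity)]
        refine ENNReal.ofReal_le_ofReal ?_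
        have hA : 0 ≤ Λ * R ^ (2 - α - β) := mul_nonneg hΛ (Real.rpow_nonneg hR.le _)
        have hkey : (1 + (ν - 2 + β) / (α + β - 2)) * Λ * R ^ (2 - α - β)
            - (ν - 2 + β) * Λ * (R ^ (2 - α - β) / (α + β - 2)) = Λ * R ^ (2 - α - β) := by
          field_simp
          ring
        linarith
end

section
/- Let (X,d) be a metric space with finite diameter D₀ > 0, let μ be a finite Borel measure on X, and fix ν > 2, β > 0, α ∈ [0,2), Λ > 0, C₀ > 0. Let G : X × X → ℝ be measurable with: (i) |G(x,y)| ≤ C₀·d(x,y)^{2−ν} for all x ≠ y; and (ii) |G(p,y) − G(q,y)| ≤ C₀·(d(p,q)/d(p,y))^β·d(q,y)^{2−ν} whenever p, q, y ∈ X satisfy d(p,q) ≤ d(p,y)/2. Let f : X → ℝ be measurable with the Morrey bound ∫_{B(x,r)} |f| dμ ≤ Λ·r^{ν−α} for every x ∈ X and r > 0, and define u(x) := ∫_X G(x,y)·f(y) dμ(y). Then: if β ≠ 2−α, u is Hölder continuous of exponent γ := min{β, 2−α}, i.e. there is a constant C (depending only on ν, α, β, C₀, Λ, D₀) with |u(p)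 − u(q)| ≤ C·d(p,q)^γ for all p, q ∈ X; and if β = 2−α, the same conclusion holds for every exponent γ ∈ (0, 2−α) (with C also depending on γ). -/
open MeasureTheory ENNReal


private lemma measurable_rpow_const' (t : ℝ) : Measurable fun x : ℝ => x ^ t :=
  measurable_of_continuousOn_compl_singleton 0 fun x hx =>
    (Real.continuousAt_rpow_const x t (Or.inl hx)).continuousWithinAt

private lemma pow_rpow_comm {x : ℝ} (hx : 0 ≤ x) (t : ℝ) (j : ℕ) :
    ((x ^ j : ℝ)) ^ t = (x ^ t) ^ j := by
  rw [← Real.rpow_natCast x j, ← Real.rpow_mul hx, mul_comm, Real.rpow_mul hx,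
    Real.rpow_natCast]

private lemma rpow_geom_id (c L : ℝ) {w x : ℝ} (hw : 0 < w) (hx : 0 < x) (s t : ℝ) (j : ℕ) :
    c * (w * x ^ j) ^ s * (L * (2 * (w * x ^ j)) ^ t) =
      (c * L * 2 ^ t * w ^ (s + t)) * ((x ^ (s + t) : ℝ)) ^ j := by
  have hb : (0:ℝ) < w * x ^ j := by positivity
  have e1 : ((2:ℝ) * (w * x ^ j)) ^ t = 2 ^ t * (w * x ^ j) ^ t :=
    Real.mul_rpow (by norm_num) hb.le
  have e2 : (w * x ^ j) ^ s * (w * x ^ j) ^ t = (w * x ^ j) ^ (s + t) :=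
    (Real.rpow_add hb s t).symm
  have e3 : (w * x ^ j) ^ (s + t) = w ^ (s + t) * ((x ^ (s + t) : ℝ)) ^ j := by
    rw [Real.mul_rpow hw.le (by positivity), pow_rpow_comm hx.le]
  rw [e1]
  calc c * (w * x ^ j) ^ s * (L * (2 ^ t * (w * x ^ j) ^ t))
      = c * L * 2 ^ t * ((w * x ^ j) ^ s * (w * x ^ j) ^ t) := by ring
    _ = c * L * 2 ^ t * (w * x ^ j) ^ (s + t) := by rw [e2]
    _ = (c * L * 2 ^ t * w ^ (s + t)) * ((x ^ (s + t) : ℝ)) ^ j := by rw [e3]; ring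

private lemma exists_dyadic_up {w e : ℝ} (hw : 0 < w) (he : w ≤ e) :
    ∃ j : ℕ, w * 2 ^ j ≤ e ∧ e < 2 * (w * 2 ^ j) := by
  have hex : ∃ n : ℕ, e < w * 2 ^ n := by
    obtain ⟨n, hn⟩ := pow_unbounded_of_one_lt (e / w) (one_lt_two (α := ℝ))
    exact ⟨n, by rw [div_lt_iff₀ hw] at hn; linarith [hn]⟩
  classical
  obtain ⟨k, hk1, hk2⟩ : ∃ k, ¬ (e < w * 2 ^ k) ∧ e < w * 2 ^ (k + 1) := by
    set m := Nat.find hex with hm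
    have hspec : e < w * 2 ^ m := Nat.find_spec hex
    have hm0 : m ≠ 0 := by
      intro h
      rw [h] at hspec
      simp only [pow_zero, mul_one] at hspec
      linarith
    obtain ⟨k, hk⟩ := Nat.exists_eq_succ_of_ne_zero hm0
    exact ⟨k, Nat.find_min hex (by omega), by rw [← Nat.succ_eq_add_one, ← hk]; exact hspec⟩
  refine ⟨k, not_lt.1 hk1, ?_⟩
  have : w * 2 ^ (k+1) = 2 * (w * 2 ^ k) := by ring
  linarith [hk2, this.symm.le]

private lemma exists_dyadic_down {R e : ℝ} (he : 0 < e) (heR : e < R) :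
    ∃ j : ℕ, (R / 2) * (1/2 : ℝ) ^ j ≤ e ∧ e < 2 * ((R / 2) * (1/2 : ℝ) ^ j) := by
  have key : ∀ j : ℕ, (R / 2) * (1/2 : ℝ) ^ j = R / 2 ^ (j + 1) := by
    intro j
    have h2j : (0:ℝ) < 2 ^ j := by positivity
    rw [pow_succ]
    field_simp
    rw [mul_assoc, ← mul_pow]; norm_num
  have key2 : ∀ j : ℕ, 2 * ((R / 2) * (1/2 : ℝ) ^ j) = R / 2 ^ j := by
    intro j
    have h2j : (0:ℝ) < 2 ^ j := by positivity
    rw [key j, pow_succ]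
    field_simp
  have hex : ∃ n : ℕ, R ≤ e * 2 ^ (n + 1) := by
    obtain ⟨n, hn⟩ := pow_unbounded_of_one_lt (R / e) (one_lt_two (α := ℝ))
    refine ⟨n, ?_⟩
    rw [div_lt_iff₀ he] at hn
    have : (2:ℝ) ^ n ≤ 2 ^ (n+1) := by
      have : (0:ℝ) < 2 ^ n := by positivity
      rw [pow_succ]
      nlinarith
    nlinarith
  classical
  set j := Nat.find hex with hj
  have hspec : R ≤ e * 2 ^ (j + 1) := Nat.find_spec hex
  refine ⟨j, ?_, ?_⟩
  · rw [key j, div_le_iff₀ (by positivity)]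
    linarith [hspec]
  · rw [key2 j]
    rcases Nat.eq_zero_or_pos j with h0 | hpos
    · rw [h0]; simpa using heR
    · have hmin := Nat.find_min hex (show j - 1 < j by omega)
      push_neg at hmin
      have : j - 1 + 1 = j := by omega
      rw [this] at hmin
      rw [lt_div_iff₀ (by positivity)]
      linarith
private lemma annulus_bound {X : Type*} [MetricSpace X] [MeasurableSpace X] [BorelSpace X]
    (μ : Measure X) (f : X → ℝ) (ν α Λ : ℝ)
    (hMorrey : ∀ (x : X) (r : ℝ), 0 < r →
      (∫⁻ y in Metric.ball x r, ENNReal.ofReal |f y| ∂μ)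
        ≤ ENNReal.ofReal (Λ * r ^ (ν - α)))
    (x : X) (a t : ℝ) (ha : 0 < a) :
    ∫⁻ y in {y | a ≤ dist x y ∧ dist x y < 2 * a}, ENNReal.ofReal (dist x y ^ t * |f y|) ∂μ
      ≤ ENNReal.ofReal (max 1 ((2:ℝ) ^ t) * a ^ t) * ENNReal.ofReal (Λ * (2 * a) ^ (ν - α)) := by
  set c := max 1 ((2:ℝ) ^ t) with hc
  have hdistm : Measurable fun y => dist x y := (continuous_const.dist continuous_id).measurable
  have hmeas : MeasurableSet {y : X | a ≤ dist x y ∧ dist x y < 2 * a} :=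
    hdistm measurableSet_Ico
  have hpt : ∀ y ∈ {y : X | a ≤ dist x y ∧ dist x y < 2 * a},
      ENNReal.ofReal (dist x y ^ t * |f y|)
        ≤ ENNReal.ofReal (c * a ^ t) * ENNReal.ofReal |f y| := by
    intro y hy
    obtain ⟨h1, h2⟩ := hy
    have hd0 : 0 < dist x y := lt_of_lt_of_le ha h1
    have hbound : dist x y ^ t ≤ c * a ^ t := by
      rcases le_or_gt 0 t with ht | ht
      · have : dist x y ^ t ≤ (2 * a) ^ t := Real.rpow_le_rpow dist_nonneg h2.le ht
        have h2a : ((2:ℝ) * a) ^ t = 2 ^ t * a ^ t := Real.mul_rpow (by norm_num) ha.le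
        have : dist x y ^ t ≤ 2 ^ t * a ^ t := by rw [← h2a]; exact this
        refine this.trans (mul_le_mul_of_nonneg_right (le_max_right _ _)
          (Real.rpow_nonneg ha.le _))
      · have : dist x y ^ t ≤ a ^ t := Real.rpow_le_rpow_of_nonpos ha h1 ht.le
        refine this.trans ?_
        exact le_mul_of_one_le_left (Real.rpow_nonneg ha.le _) (le_max_left _ _)
    rw [← ENNReal.ofReal_mul (by positivity)]
    exact ENNReal.ofReal_le_ofReal (mul_le_mul_of_nonneg_right hbound (abs_nonneg _))
  calc ∫⁻ y in {y : X | a ≤ dist x y ∧ dist x y < 2 * a},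
        ENNReal.ofReal (dist x y ^ t * |f y|) ∂μ
      ≤ ∫⁻ y in {y : X | a ≤ dist x y ∧ dist x y < 2 * a},
          ENNReal.ofReal (c * a ^ t) * ENNReal.ofReal |f y| ∂μ :=
        setLIntegral_mono' hmeas hpt
    _ = ENNReal.ofReal (c * a ^ t) *
          ∫⁻ y in {y : X | a ≤ dist x y ∧ dist x y < 2 * a}, ENNReal.ofReal |f y| ∂μ :=
        lintegral_const_mul' _ _ ENNReal.ofReal_ne_top
    _ ≤ ENNReal.ofReal (c * a ^ t) *
          ∫⁻ y in Metric.ball x (2 * a), ENNReal.ofReal |f y| ∂μ := by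
        gcongr
        intro y hy
        exact Metric.mem_ball.2 (by rw [dist_comm]; exact hy.2)
    _ ≤ ENNReal.ofReal (c * a ^ t) * ENNReal.ofReal (Λ * (2 * a) ^ (ν - α)) := by
        gcongr
        exact hMorrey x (2 * a) (by linarith)

private lemma singleton_lintegral_zero {X : Type*} [MetricSpace X] [MeasurableSpace X]
    [BorelSpace X] (μ : Measure X) (f : X → ℝ) (ν α Λ : ℝ) (hΛ : 0 < Λ) (hνα : 0 < ν - α)
    (hMorrey : ∀ (x : X) (r : ℝ), 0 < r →
      (∫⁻ y in Metric.ball x r, ENNReal.ofReal |f y| ∂μ)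
        ≤ ENNReal.ofReal (Λ * r ^ (ν - α)))
    (x : X) : ∫⁻ y in {x}, ENNReal.ofReal |f y| ∂μ = 0 := by
  have key : ∀ ε : ℝ, 0 < ε →
      ∫⁻ y in {x}, ENNReal.ofReal |f y| ∂μ ≤ ENNReal.ofReal ε := by
    intro ε hε
    set r := (ε / Λ) ^ (ν - α)⁻¹ with hr
    have hr0 : 0 < r := Real.rpow_pos_of_pos (div_pos hε hΛ) _
    have hsub : ({x} : Set X) ⊆ Metric.ball x r :=
      Set.singleton_subset_iff.2 (Metric.mem_ball_self hr0)
    have hval : Λ * r ^ (ν - α) = ε := by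
      rw [hr, Real.rpow_inv_rpow (le_of_lt (div_pos hε hΛ)) hνα.ne']
      field_simp
    calc ∫⁻ y in {x}, ENNReal.ofReal |f y| ∂μ
        ≤ ∫⁻ y in Metric.ball x r, ENNReal.ofReal |f y| ∂μ := lintegral_mono_set hsub
      _ ≤ ENNReal.ofReal (Λ * r ^ (ν - α)) := hMorrey x r hr0
      _ = ENNReal.ofReal ε := by rw [hval]
  refine le_antisymm ?_ zero_le
  refine ENNReal.le_of_forall_pos_le_add fun ε hε _ => ?_
  rw [zero_add]
  have := key ε (by exact_mod_cast hε)
  rwa [ENNReal.ofReal_coe_nnreal] at this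
private lemma near_bound {X : Type*} [MetricSpace X] [MeasurableSpace X] [BorelSpace X]
    (μ : Measure X) (f : X → ℝ) (ν α Λ : ℝ) (hν : 2 < ν) (hα2 : α < 2) (hΛ : 0 < Λ)
    (hMorrey : ∀ (x : X) (r : ℝ), 0 < r →
      (∫⁻ y in Metric.ball x r, ENNReal.ofReal |f y| ∂μ)
        ≤ ENNReal.ofReal (Λ * r ^ (ν - α))) :
    ∃ K : ℝ, 0 < K ∧ ∀ (x : X) (R : ℝ), 0 < R →
      ∫⁻ y in Metric.ball x R, ENNReal.ofReal (dist x y ^ (2 - ν) * |f y|) ∂μ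
        ≤ ENNReal.ofReal (K * R ^ (2 - α)) := by
  classical
  set c₁ := max 1 ((2:ℝ) ^ (2 - ν)) with hc₁def
  have hc₁ : 0 < c₁ := lt_of_lt_of_le one_pos (le_max_left _ _)
  set q := (1/2 : ℝ) ^ (2 - α) with hqdef
  have hq0 : 0 ≤ q := Real.rpow_nonneg (by norm_num) _
  have hq1 : q < 1 := Real.rpow_lt_one (by norm_num) (by norm_num) (by linarith)
  have h1q : 0 < 1 - q := by linarith
  refine ⟨c₁ * Λ * 2 ^ (ν - α) * 2 ^ (α - 2) * (1 - q)⁻¹, by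
    have h2a : (0:ℝ) < (2:ℝ) ^ (ν - α) := Real.rpow_pos_of_pos (by norm_num) _
    have h2b : (0:ℝ) < (2:ℝ) ^ (α - 2) := Real.rpow_pos_of_pos (by norm_num) _
    exact mul_pos (mul_pos (mul_pos (mul_pos hc₁ hΛ) h2a) h2b) (inv_pos.2 h1q), ?_⟩
  intro x R hR
  set A : ℕ → Set X := fun j =>
    {y | (R/2) * (1/2 : ℝ) ^ j ≤ dist x y ∧ dist x y < 2 * ((R/2) * (1/2 : ℝ) ^ j)} with hA
  have hcov : Metric.ball x R ⊆ {x} ∪ ⋃ j, A j := by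
    intro y hy
    rcases eq_or_ne y x with h | h
    · exact Or.inl (by simp [h])
    · have hd0 : 0 < dist x y := dist_pos.2 (Ne.symm h)
      have hdR : dist x y < R := by rw [dist_comm]; exact Metric.mem_ball.1 hy
      obtain ⟨j, hj1, hj2⟩ := exists_dyadic_down hd0 hdR
      exact Or.inr (Set.mem_iUnion.2 ⟨j, hj1, hj2⟩)
  have hsingle : ∫⁻ y in ({x} : Set X), ENNReal.ofReal (dist x y ^ (2 - ν) * |f y|) ∂μ = 0 := by
    rw [lintegral_singleton]
    simp [Real.zero_rpow (show (2:ℝ) - ν ≠ 0 by linarith)]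
  have hann : ∀ j : ℕ, ∫⁻ y in A j, ENNReal.ofReal (dist x y ^ (2 - ν) * |f y|) ∂μ
      ≤ ENNReal.ofReal ((c₁ * Λ * 2 ^ (ν - α) * (R/2) ^ (2 - α)) * q ^ j) := by
    intro j
    have haj : (0:ℝ) < (R/2) * (1/2 : ℝ) ^ j := by positivity
    have hb := annulus_bound μ f ν α Λ hMorrey x ((R/2) * (1/2 : ℝ) ^ j) (2 - ν) haj
    rw [← ENNReal.ofReal_mul (by positivity)] at hb
    refine hb.trans (le_of_eq ?_)
    congr 1
    have hid := rpow_geom_id c₁ Λ (show (0:ℝ) < R/2 by linarith)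
      (show (0:ℝ) < 1/2 by norm_num) (2 - ν) (ν - α) j
    rw [show (2 - ν) + (ν - α) = 2 - α by ring] at hid
    calc c₁ * ((R/2) * (1/2 : ℝ) ^ j) ^ (2 - ν) * (Λ * (2 * ((R/2) * (1/2 : ℝ) ^ j)) ^ (ν - α))
        = (c₁ * Λ * 2 ^ (ν - α) * (R/2) ^ (2 - α)) * ((1/2 : ℝ) ^ (2 - α)) ^ j := hid
      _ = (c₁ * Λ * 2 ^ (ν - α) * (R/2) ^ (2 - α)) * q ^ j := by rw [hqdef]
  have hsum : ∑' j : ℕ, ENNReal.ofReal ((c₁ * Λ * 2 ^ (ν - α) * (R/2) ^ (2 - α)) * q ^ j)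
      = ENNReal.ofReal ((c₁ * Λ * 2 ^ (ν - α) * (R/2) ^ (2 - α)) * (1 - q)⁻¹) := by
    rw [← ENNReal.ofReal_tsum_of_nonneg (fun j => by positivity)
      ((summable_geometric_of_lt_one hq0 hq1).mul_left _)]
    rw [tsum_mul_left, tsum_geometric_of_lt_one hq0 hq1]
  have hfinal : (c₁ * Λ * 2 ^ (ν - α) * (R/2) ^ (2 - α)) * (1 - q)⁻¹
      = (c₁ * Λ * 2 ^ (ν - α) * 2 ^ (α - 2) * (1 - q)⁻¹) * R ^ (2 - α) := by
    have e1 : ((R:ℝ)/2) ^ (2 - α) = R ^ (2 - α) * ((2:ℝ) ^ (2 - α))⁻¹ := by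
      rw [Real.div_rpow hR.le (by norm_num), div_eq_mul_inv]
    have e2 : ((2:ℝ) ^ (2 - α))⁻¹ = (2:ℝ) ^ (α - 2) := by
      rw [show (α - 2 : ℝ) = -(2 - α) by ring, Real.rpow_neg (by norm_num)]
    rw [e1, e2]; ring
  calc ∫⁻ y in Metric.ball x R, ENNReal.ofReal (dist x y ^ (2 - ν) * |f y|) ∂μ
      ≤ ∫⁻ y in ({x} : Set X) ∪ ⋃ j, A j, ENNReal.ofReal (dist x y ^ (2 - ν) * |f y|) ∂μ :=
        lintegral_mono_set hcov
    _ ≤ (∫⁻ y in ({x} : Set X), ENNReal.ofReal (dist x y ^ (2 - ν) * |f y|) ∂μ) +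
          ∫⁻ y in ⋃ j, A j, ENNReal.ofReal (dist x y ^ (2 - ν) * |f y|) ∂μ :=
        lintegral_union_le _ _ _
    _ = ∫⁻ y in ⋃ j, A j, ENNReal.ofReal (dist x y ^ (2 - ν) * |f y|) ∂μ := by
        rw [hsingle, zero_add]
    _ ≤ ∑' j : ℕ, ∫⁻ y in A j, ENNReal.ofReal (dist x y ^ (2 - ν) * |f y|) ∂μ :=
        lintegral_iUnion_le _ _
    _ ≤ ∑' j : ℕ, ENNReal.ofReal ((c₁ * Λ * 2 ^ (ν - α) * (R/2) ^ (2 - α)) * q ^ j) :=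
        ENNReal.tsum_le_tsum hann
    _ = ENNReal.ofReal ((c₁ * Λ * 2 ^ (ν - α) * 2 ^ (α - 2) * (1 - q)⁻¹) * R ^ (2 - α)) := by
        rw [hsum, hfinal]
private lemma far_bound {X : Type*} [MetricSpace X] [MeasurableSpace X] [BorelSpace X]
    (μ : Measure X) (D₀ : ℝ) (hD₀ : 0 < D₀) (hdistD : ∀ x y : X, dist x y ≤ D₀)
    (ν β α Λ C₀ : ℝ) (hν : 2 < ν) (hβ : 0 < β) (hα0 : 0 ≤ α) (hα2 : α < 2)
    (hΛ : 0 < Λ) (hC₀ : 0 < C₀)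
    (G : X → X → ℝ)
    (hG₂ : ∀ p q y : X, dist p q ≤ dist p y / 2 →
      |G p y - G q y| ≤ C₀ * (dist p q / dist p y) ^ β * dist q y ^ (2 - ν))
    (f : X → ℝ)
    (hMorrey : ∀ (x : X) (r : ℝ), 0 < r →
      (∫⁻ y in Metric.ball x r, ENNReal.ofReal |f y| ∂μ)
        ≤ ENNReal.ofReal (Λ * r ^ (ν - α)))
    (γ : ℝ)
    (hcase : (0 < γ ∧ γ ≤ β ∧ γ < 2 - α) ∨ (γ = 2 - α ∧ 2 - α < β)) :
    ∃ K : ℝ, 0 < K ∧ ∀ p q : X, 0 < dist p q →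
      ∫⁻ y in {y | 2 * dist p q ≤ dist p y}, ENNReal.ofReal (|G p y - G q y| * |f y|) ∂μ
        ≤ ENNReal.ofReal (K * dist p q ^ γ) := by
  classical
  -- pointwise estimate on the far region, for any exponent σ with 0 < σ ≤ β
  have hpoint : ∀ σ : ℝ, 0 < σ → σ ≤ β → ∀ p q : X, 0 < dist p q → ∀ y : X,
      2 * dist p q ≤ dist p y →
      |G p y - G q y| * |f y|
        ≤ (C₀ * 2 ^ (ν - 2) * dist p q ^ σ) * (dist p y ^ (2 - ν - σ) * |f y|) := by
    intro σ hσ0 hσβ p q hr y hy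
    have hd0 : 0 < dist p y := lt_of_lt_of_le (by linarith) hy
    have h1 := hG₂ p q y (by linarith)
    have hdq : dist p y / 2 ≤ dist q y := by
      have := dist_triangle p q y
      linarith
    have h2 : dist q y ^ (2 - ν) ≤ (dist p y / 2) ^ (2 - ν) :=
      Real.rpow_le_rpow_of_nonpos (by linarith) hdq (by linarith)
    have h3 : (dist p q / dist p y) ^ β ≤ (dist p q / dist p y) ^ σ :=
      Real.rpow_le_rpow_of_exponent_ge (div_pos hr hd0)
        (by rw [div_le_one hd0]; linarith) hσβ
    have h4 : (dist p y / 2 : ℝ) ^ (2 - ν) = 2 ^ (ν - 2) * dist p y ^ (2 - ν) := by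
      rw [Real.div_rpow dist_nonneg (by norm_num), div_eq_mul_inv,
        show ((2:ℝ) ^ (2 - ν))⁻¹ = (2:ℝ) ^ (ν - 2) by
          rw [show (ν - 2 : ℝ) = -(2 - ν) by ring, Real.rpow_neg (by norm_num)],
        mul_comm]
    have h5 : (dist p q / dist p y) ^ σ = dist p q ^ σ * dist p y ^ (-σ) := by
      rw [Real.div_rpow hr.le dist_nonneg, div_eq_mul_inv,
        Real.rpow_neg dist_nonneg]
    have h6 : dist p y ^ (-σ) * dist p y ^ (2 - ν) = dist p y ^ (2 - ν - σ) := by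
      rw [← Real.rpow_add hd0]; congr 1; ring
    have hmain : |G p y - G q y| ≤ (C₀ * 2 ^ (ν - 2) * dist p q ^ σ) * dist p y ^ (2 - ν - σ) := by
      calc |G p y - G q y| ≤ C₀ * (dist p q / dist p y) ^ β * dist q y ^ (2 - ν) := h1
        _ ≤ C₀ * (dist p q / dist p y) ^ σ * (2 ^ (ν - 2) * dist p y ^ (2 - ν)) := by
            have hq2 : dist q y ^ (2 - ν) ≤ 2 ^ (ν - 2) * dist p y ^ (2 - ν) := h2.trans_eq h4
            have ha : 0 ≤ C₀ * (dist p q / dist p y) ^ β :=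
              mul_nonneg hC₀.le (Real.rpow_nonneg (div_nonneg hr.le dist_nonneg) _)
            have hb : 0 ≤ dist q y ^ (2 - ν) := Real.rpow_nonneg dist_nonneg _
            exact mul_le_mul (mul_le_mul_of_nonneg_left h3 hC₀.le) hq2 hb
              (by positivity)
        _ = (C₀ * 2 ^ (ν - 2) * dist p q ^ σ) * dist p y ^ (2 - ν - σ) := by
            rw [h5, ← h6]; ring
    calc |G p y - G q y| * |f y|
        ≤ ((C₀ * 2 ^ (ν - 2) * dist p q ^ σ) * dist p y ^ (2 - ν - σ)) * |f y| :=
          mul_le_mul_of_nonneg_right hmain (abs_nonneg _)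
      _ = (C₀ * 2 ^ (ν - 2) * dist p q ^ σ) * (dist p y ^ (2 - ν - σ) * |f y|) := by ring
  -- far region is measurable
  have hSmeas : ∀ (p : X) (r : ℝ), MeasurableSet {y : X | 2 * r ≤ dist p y} := by
    intro p r
    exact (continuous_const.dist continuous_id).measurable measurableSet_Ici
  -- reduction: it suffices to bound the tail integral of the weight
  have hreduce : ∀ σ : ℝ, 0 < σ → σ ≤ β → ∀ p q : X, 0 < dist p q →
      ∫⁻ y in {y | 2 * dist p q ≤ dist p y}, ENNReal.ofReal (|G p y - G q y| * |f y|) ∂μ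
        ≤ ENNReal.ofReal (C₀ * 2 ^ (ν - 2) * dist p q ^ σ) *
            ∫⁻ y in {y | 2 * dist p q ≤ dist p y},
              ENNReal.ofReal (dist p y ^ (2 - ν - σ) * |f y|) ∂μ := by
    intro σ hσ0 hσβ p q hr
    calc ∫⁻ y in {y | 2 * dist p q ≤ dist p y}, ENNReal.ofReal (|G p y - G q y| * |f y|) ∂μ
        ≤ ∫⁻ y in {y | 2 * dist p q ≤ dist p y},
            ENNReal.ofReal (C₀ * 2 ^ (ν - 2) * dist p q ^ σ) *
              ENNReal.ofReal (dist p y ^ (2 - ν - σ) * |f y|) ∂μ := by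
          refine setLIntegral_mono' (hSmeas p (dist p q)) fun y hy => ?_
          rw [← ENNReal.ofReal_mul (by positivity)]
          exact ENNReal.ofReal_le_ofReal (hpoint σ hσ0 hσβ p q hr y hy)
      _ = ENNReal.ofReal (C₀ * 2 ^ (ν - 2) * dist p q ^ σ) *
            ∫⁻ y in {y | 2 * dist p q ≤ dist p y},
              ENNReal.ofReal (dist p y ^ (2 - ν - σ) * |f y|) ∂μ :=
          lintegral_const_mul' _ _ ENNReal.ofReal_ne_top
  -- per-annulus bound for the weight integral
  have hannF : ∀ (σ : ℝ) (p : X) (r : ℝ), 0 < r → ∀ j : ℕ,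
      ∫⁻ y in {y | (2*r) * 2 ^ j ≤ dist p y ∧ dist p y < 2 * ((2*r) * 2 ^ j)},
        ENNReal.ofReal (dist p y ^ (2 - ν - σ) * |f y|) ∂μ
      ≤ ENNReal.ofReal ((max 1 ((2:ℝ) ^ (2 - ν - σ)) * Λ * 2 ^ (ν - α) * (2*r) ^ (2 - α - σ)) *
          ((2:ℝ) ^ (2 - α - σ)) ^ j) := by
    intro σ p r hr j
    have haj : (0:ℝ) < (2*r) * 2 ^ j := by positivity
    have hb := annulus_bound μ f ν α Λ hMorrey p ((2*r) * 2 ^ j) (2 - ν - σ) haj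
    rw [← ENNReal.ofReal_mul (by positivity)] at hb
    refine hb.trans (le_of_eq ?_)
    congr 1
    have hid := rpow_geom_id (max 1 ((2:ℝ) ^ (2 - ν - σ))) Λ
      (show (0:ℝ) < 2*r by linarith) (show (0:ℝ) < 2 by norm_num) (2 - ν - σ) (ν - α) j
    rw [show (2 - ν - σ) + (ν - α) = 2 - α - σ by ring] at hid
    exact hid
  rcases hcase with ⟨hγ0, hγβ, hγ2⟩ | ⟨hγeq, hβ2⟩
  · -- case A : γ < 2 - α, use σ = γ and a truncated geometric sum
    set σ := γ with hσdef
    set δ := 2 - α - γ with hδdef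
    have hδ : 0 < δ := by rw [hδdef]; linarith
    set qA := (2:ℝ) ^ δ with hqAdef
    have hqA1 : 1 < qA := Real.one_lt_rpow_iff_of_pos (by norm_num) |>.2 (Or.inl ⟨one_lt_two, hδ⟩)
    have hqA0 : 0 < qA := lt_trans one_pos hqA1
    set cσ := max 1 ((2:ℝ) ^ (2 - ν - γ)) with hcσdef
    have hcσ : 0 < cσ := lt_of_lt_of_le one_pos (le_max_left _ _)
    set MA := cσ * Λ * 2 ^ (ν - α) * (2 * D₀) ^ δ / (qA - 1) with hMAdef
    have hMA : 0 < MA := by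
      apply div_pos _ (by linarith)
      have : (0:ℝ) < (2 * D₀) ^ δ := Real.rpow_pos_of_pos (by linarith) _
      have h2a : (0:ℝ) < (2:ℝ) ^ (ν - α) := Real.rpow_pos_of_pos (by norm_num) _
      exact mul_pos (mul_pos (mul_pos hcσ hΛ) h2a) this
    refine ⟨C₀ * 2 ^ (ν - 2) * MA, by
      have h2b : (0:ℝ) < (2:ℝ) ^ (ν - 2) := Real.rpow_pos_of_pos (by norm_num) _
      exact mul_pos (mul_pos hC₀ h2b) hMA, ?_⟩
    intro p q hr
    have htail : ∫⁻ y in {y | 2 * dist p q ≤ dist p y},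
        ENNReal.ofReal (dist p y ^ (2 - ν - γ) * |f y|) ∂μ ≤ ENNReal.ofReal MA := by
      set r := dist p q with hrdef
      by_cases hrD : D₀ < 2 * r
      · have hS : {y : X | 2 * r ≤ dist p y} = ∅ := by
          ext y
          simp only [Set.mem_setOf_eq, Set.mem_empty_iff_false, iff_false, not_le]
          exact lt_of_le_of_lt (hdistD p y) hrD
        rw [hS, setLIntegral_empty]
        exact zero_le
      · push_neg at hrD
        have hex : ∃ n : ℕ, D₀ < 2 * r * 2 ^ n := by
          obtain ⟨n, hn⟩ := pow_unbounded_of_one_lt (D₀ / (2 * r)) (one_lt_two (α := ℝ))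
          refine ⟨n, ?_⟩
          rw [div_lt_iff₀ (by linarith)] at hn
          linarith [hn]
        set N := Nat.find hex with hNdef
        have hN : D₀ < 2 * r * 2 ^ N := Nat.find_spec hex
        have hN0 : N ≠ 0 := by
          intro h
          rw [h] at hN
          simp only [pow_zero, mul_one] at hN
          linarith
        have hNm : 2 * r * 2 ^ (N - 1) ≤ D₀ := by
          have := Nat.find_min hex (show N - 1 < N by omega)
          push_neg at this
          exact this
        -- coverage by annuli with index < N
        set AF : ℕ → Set X := fun j =>
          {y | (2*r) * 2 ^ j ≤ dist p y ∧ dist p y < 2 * ((2*r) * 2 ^ j)} with hAF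
        have hcov : {y : X | 2 * r ≤ dist p y} ⊆ ⋃ j, (if j < N then AF j else (∅ : Set X)) := by
          intro y hy
          have hy' : 2 * r ≤ dist p y := hy
          obtain ⟨j, hj1, hj2⟩ := exists_dyadic_up (show (0:ℝ) < 2 * r by linarith) hy'
          have hjN : j < N := by
            by_contra hc
            push_neg at hc
            have h2pow : (2:ℝ) ^ N ≤ 2 ^ j := pow_le_pow_right₀ (one_le_two (α := ℝ)) hc
            have : 2 * r * 2 ^ N ≤ 2 * r * 2 ^ j := by nlinarith
            have : 2 * r * 2 ^ j ≤ D₀ := le_trans (by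
              calc (2*r) * 2 ^ j ≤ dist p y := hj1
                _ ≤ D₀ := hdistD p y) (le_refl _)
            linarith
          exact Set.mem_iUnion.2 ⟨j, by rw [if_pos hjN]; exact ⟨hj1, hj2⟩⟩
        set KK := cσ * Λ * 2 ^ (ν - α) * (2*r) ^ δ with hKKdef
        have hKK0 : 0 ≤ KK := by positivity
        have hterm : ∀ j : ℕ,
            ∫⁻ y in (if j < N then AF j else (∅ : Set X)),
              ENNReal.ofReal (dist p y ^ (2 - ν - γ) * |f y|) ∂μ
            ≤ (if j < N then ENNReal.ofReal (KK * qA ^ j) else 0) := by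
          intro j
          by_cases hj : j < N
          · rw [if_pos hj, if_pos hj]
            exact hannF γ p r hr j
          · rw [if_neg hj, if_neg hj, setLIntegral_empty]
        have hsum : ∑' j : ℕ, (if j < N then ENNReal.ofReal (KK * qA ^ j) else 0)
            = ENNReal.ofReal (∑ j ∈ Finset.range N, KK * qA ^ j) := by
          rw [tsum_eq_sum (s := Finset.range N)
            (fun j hj => if_neg (by simpa using hj))]
          rw [ENNReal.ofReal_sum_of_nonneg (fun i _ => by positivity)]
          exact Finset.sum_congr rfl fun j hj => if_pos (Finset.mem_range.1 hj)
        have hgeom : ∑ j ∈ Finset.range N, KK * qA ^ j ≤ MA := by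
          rw [← Finset.mul_sum, geom_sum_eq hqA1.ne' N]
          have hpowN : (2*r) ^ δ * qA ^ N ≤ (2 * D₀) ^ δ := by
            have e1 : qA ^ N = ((2:ℝ) ^ N) ^ δ := (pow_rpow_comm (by norm_num) δ N).symm
            have e2 : (2*r) ^ δ * ((2:ℝ) ^ N) ^ δ = ((2*r) * 2 ^ N) ^ δ :=
              (Real.mul_rpow (by linarith) (by positivity)).symm
            have e3 : 2 * r * 2 ^ N ≤ 2 * D₀ := by
              have : (2:ℝ) ^ N = 2 ^ (N - 1) * 2 := by
                rw [← pow_succ]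
                congr 1
                omega
              nlinarith
            rw [e1, e2]
            exact Real.rpow_le_rpow (by positivity) e3 hδ.le
          have hq1' : (0:ℝ) < qA - 1 := by linarith
          have hKKN : KK * (qA ^ N - 1) ≤ cσ * Λ * 2 ^ (ν - α) * (2 * D₀) ^ δ := by
            calc KK * (qA ^ N - 1) ≤ KK * qA ^ N :=
                  mul_le_mul_of_nonneg_left (by linarith) hKK0
              _ = cσ * Λ * 2 ^ (ν - α) * ((2*r) ^ δ * qA ^ N) := by rw [hKKdef]; ring
              _ ≤ cσ * Λ * 2 ^ (ν - α) * (2 * D₀) ^ δ :=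
                  mul_le_mul_of_nonneg_left hpowN (by positivity)
          calc KK * ((qA ^ N - 1) / (qA - 1)) = (KK * (qA ^ N - 1)) / (qA - 1) := by ring
            _ ≤ (cσ * Λ * 2 ^ (ν - α) * (2 * D₀) ^ δ) / (qA - 1) := by gcongr
            _ = MA := by rw [hMAdef]
        calc ∫⁻ y in {y | 2 * r ≤ dist p y},
              ENNReal.ofReal (dist p y ^ (2 - ν - γ) * |f y|) ∂μ
            ≤ ∫⁻ y in ⋃ j, (if j < N then AF j else (∅ : Set X)),
                ENNReal.ofReal (dist p y ^ (2 - ν - γ) * |f y|) ∂μ := lintegral_mono_set hcov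
          _ ≤ ∑' j : ℕ, ∫⁻ y in (if j < N then AF j else (∅ : Set X)),
                ENNReal.ofReal (dist p y ^ (2 - ν - γ) * |f y|) ∂μ := lintegral_iUnion_le _ _
          _ ≤ ∑' j : ℕ, (if j < N then ENNReal.ofReal (KK * qA ^ j) else 0) :=
              ENNReal.tsum_le_tsum hterm
          _ = ENNReal.ofReal (∑ j ∈ Finset.range N, KK * qA ^ j) := hsum
          _ ≤ ENNReal.ofReal MA := ENNReal.ofReal_le_ofReal hgeom
    calc ∫⁻ y in {y | 2 * dist p q ≤ dist p y},
          ENNReal.ofReal (|G p y - G q y| * |f y|) ∂μ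
        ≤ ENNReal.ofReal (C₀ * 2 ^ (ν - 2) * dist p q ^ γ) *
            ∫⁻ y in {y | 2 * dist p q ≤ dist p y},
              ENNReal.ofReal (dist p y ^ (2 - ν - γ) * |f y|) ∂μ :=
          hreduce γ hγ0 hγβ p q hr
      _ ≤ ENNReal.ofReal (C₀ * 2 ^ (ν - 2) * dist p q ^ γ) * ENNReal.ofReal MA := by
          gcongr
      _ = ENNReal.ofReal ((C₀ * 2 ^ (ν - 2) * MA) * dist p q ^ γ) := by
          rw [← ENNReal.ofReal_mul (by positivity)]
          congr 1
          ring
  · -- case B : 2 - α < β, γ = 2 - α, use σ = β and the full geometric series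
    set δ := 2 - α - β with hδdef
    have hδ : δ < 0 := by rw [hδdef]; linarith
    set qB := (2:ℝ) ^ δ with hqBdef
    have hqB0 : 0 ≤ qB := Real.rpow_nonneg (by norm_num) _
    have hqB1 : qB < 1 := Real.rpow_lt_one_of_one_lt_of_neg one_lt_two hδ
    have h1qB : 0 < 1 - qB := by linarith
    set cσ := max 1 ((2:ℝ) ^ (2 - ν - β)) with hcσdef
    have hcσ : 0 < cσ := lt_of_lt_of_le one_pos (le_max_left _ _)
    set MB := cσ * Λ * 2 ^ (ν - α) * 2 ^ δ * (1 - qB)⁻¹ with hMBdef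
    have hMB : 0 < MB := by
      have h2a : (0:ℝ) < (2:ℝ) ^ (ν - α) := Real.rpow_pos_of_pos (by norm_num) _
      have h2b : (0:ℝ) < (2:ℝ) ^ δ := Real.rpow_pos_of_pos (by norm_num) _
      exact mul_pos (mul_pos (mul_pos (mul_pos hcσ hΛ) h2a) h2b) (inv_pos.2 h1qB)
    refine ⟨C₀ * 2 ^ (ν - 2) * MB, by
      have h2b : (0:ℝ) < (2:ℝ) ^ (ν - 2) := Real.rpow_pos_of_pos (by norm_num) _
      exact mul_pos (mul_pos hC₀ h2b) hMB, ?_⟩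
    intro p q hr
    set r := dist p q with hrdef
    set AF : ℕ → Set X := fun j =>
      {y | (2*r) * 2 ^ j ≤ dist p y ∧ dist p y < 2 * ((2*r) * 2 ^ j)} with hAF
    have hcov : {y : X | 2 * r ≤ dist p y} ⊆ ⋃ j, AF j := by
      intro y hy
      obtain ⟨j, hj1, hj2⟩ := exists_dyadic_up (show (0:ℝ) < 2 * r by linarith) hy
      exact Set.mem_iUnion.2 ⟨j, hj1, hj2⟩
    set KK := cσ * Λ * 2 ^ (ν - α) * (2*r) ^ δ with hKKdef
    have htail : ∫⁻ y in {y | 2 * r ≤ dist p y},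
        ENNReal.ofReal (dist p y ^ (2 - ν - β) * |f y|) ∂μ
        ≤ ENNReal.ofReal (KK * (1 - qB)⁻¹) := by
      calc ∫⁻ y in {y | 2 * r ≤ dist p y},
            ENNReal.ofReal (dist p y ^ (2 - ν - β) * |f y|) ∂μ
          ≤ ∫⁻ y in ⋃ j, AF j,
              ENNReal.ofReal (dist p y ^ (2 - ν - β) * |f y|) ∂μ := lintegral_mono_set hcov
        _ ≤ ∑' j : ℕ, ∫⁻ y in AF j,
              ENNReal.ofReal (dist p y ^ (2 - ν - β) * |f y|) ∂μ := lintegral_iUnion_le _ _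
        _ ≤ ∑' j : ℕ, ENNReal.ofReal (KK * qB ^ j) :=
            ENNReal.tsum_le_tsum (fun j => hannF β p r hr j)
        _ = ENNReal.ofReal (KK * (1 - qB)⁻¹) := by
            rw [← ENNReal.ofReal_tsum_of_nonneg (fun j => by positivity)
              ((summable_geometric_of_lt_one hqB0 hqB1).mul_left _)]
            rw [tsum_mul_left, tsum_geometric_of_lt_one hqB0 hqB1]
    have hfinal : (C₀ * 2 ^ (ν - 2) * r ^ β) * (KK * (1 - qB)⁻¹)
        = (C₀ * 2 ^ (ν - 2) * MB) * r ^ γ := by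
      have e1 : r ^ β * (2*r) ^ δ = 2 ^ δ * r ^ γ := by
        rw [Real.mul_rpow (by norm_num) hr.le]
        have e0 : r ^ β * r ^ δ = r ^ γ := by
          rw [← Real.rpow_add hr]
          congr 1
          rw [hδdef, hγeq]
          ring
        linear_combination (2:ℝ) ^ δ * e0
      rw [hKKdef, hMBdef]
      linear_combination (C₀ * 2 ^ (ν - 2) * (cσ * Λ * 2 ^ (ν - α)) * (1 - qB)⁻¹) * e1
    calc ∫⁻ y in {y | 2 * r ≤ dist p y}, ENNReal.ofReal (|G p y - G q y| * |f y|) ∂μ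
        ≤ ENNReal.ofReal (C₀ * 2 ^ (ν - 2) * r ^ β) *
            ∫⁻ y in {y | 2 * r ≤ dist p y},
              ENNReal.ofReal (dist p y ^ (2 - ν - β) * |f y|) ∂μ :=
          hreduce β hβ (le_refl β) p q hr
      _ ≤ ENNReal.ofReal (C₀ * 2 ^ (ν - 2) * r ^ β) * ENNReal.ofReal (KK * (1 - qB)⁻¹) := by
          gcongr
      _ = ENNReal.ofReal ((C₀ * 2 ^ (ν - 2) * r ^ β) * (KK * (1 - qB)⁻¹)) := by
          rw [← ENNReal.ofReal_mul (by positivity)]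
      _ = ENNReal.ofReal ((C₀ * 2 ^ (ν - 2) * MB) * r ^ γ) := by rw [hfinal]
private lemma key_estimate
    {X : Type*} [MetricSpace X] [MeasurableSpace X] [BorelSpace X]
    (μ : Measure X) [IsFiniteMeasure μ]
    (D₀ : ℝ) (hD₀ : 0 < D₀) (hdiam : EMetric.diam (Set.univ : Set X) = ENNReal.ofReal D₀)
    (ν β α Λ C₀ : ℝ) (hν : 2 < ν) (hβ : 0 < β) (hα : α ∈ Set.Ico (0 : ℝ) 2)
    (hΛ : 0 < Λ) (hC₀ : 0 < C₀)
    (G : X → X → ℝ) (hGmeas : Measurable (Function.uncurry G))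
    (hG₁ : ∀ x y : X, x ≠ y → |G x y| ≤ C₀ * dist x y ^ (2 - ν))
    (hG₂ : ∀ p q y : X, dist p q ≤ dist p y / 2 →
      |G p y - G q y| ≤ C₀ * (dist p q / dist p y) ^ β * dist q y ^ (2 - ν))
    (f : X → ℝ) (hf : Measurable f)
    (hMorrey : ∀ (x : X) (r : ℝ), 0 < r →
      (∫⁻ y in Metric.ball x r, ENNReal.ofReal |f y| ∂μ)
        ≤ ENNReal.ofReal (Λ * r ^ (ν - α)))
    (γ : ℝ)
    (hcase : (0 < γ ∧ γ ≤ β ∧ γ < 2 - α) ∨ (γ = 2 - α ∧ 2 - α < β)) :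
    ∃ C : ℝ, 0 < C ∧ ∀ p q : X,
      |(∫ y, G p y * f y ∂μ) - ∫ y, G q y * f y ∂μ| ≤ C * dist p q ^ γ := by
  classical
  obtain ⟨hα0, hα2⟩ := hα
  have hγ0 : 0 < γ := by rcases hcase with ⟨h, _, _⟩ | ⟨h, h'⟩ <;> [exact h; (rw [h]; linarith)]
  have hγ2A : γ ≤ 2 - α := by
    rcases hcase with ⟨_, _, h⟩ | ⟨h, _⟩ <;> [linarith; (rw [h])]
  -- finite diameter
  have hdistD : ∀ x y : X, dist x y ≤ D₀ := by
    have hbdd : Bornology.IsBounded (Set.univ : Set X) :=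
      Metric.isBounded_iff_ediam_ne_top.2 (by rw [show Metric.ediam (Set.univ : Set X) = ENNReal.ofReal D₀ from hdiam]; exact ENNReal.ofReal_ne_top)
    have hdval : Metric.diam (Set.univ : Set X) = D₀ := by
      rw [Metric.diam, show Metric.ediam (Set.univ : Set X) = ENNReal.ofReal D₀ from hdiam, ENNReal.toReal_ofReal hD₀.le]
    intro x y
    have := Metric.dist_le_diam_of_mem hbdd (Set.mem_univ x) (Set.mem_univ y)
    rwa [hdval] at this
  -- vanishing of |f| on singletons
  have hsingF : ∀ x : X, ∫⁻ y in ({x} : Set X), ENNReal.ofReal |f y| ∂μ = 0 :=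
    singleton_lintegral_zero μ f ν α Λ hΛ (by linarith) hMorrey
  have hsing : ∀ (g : X → ℝ) (x : X),
      ∫⁻ y in ({x} : Set X), ENNReal.ofReal (|g y| * |f y|) ∂μ = 0 := by
    intro g x
    rw [lintegral_singleton]
    have h0 : ENNReal.ofReal |f x| * μ {x} = 0 := by
      have := hsingF x; rwa [lintegral_singleton] at this
    rcases mul_eq_zero.1 h0 with h | h
    · have hfx : f x = 0 := by
        have h1 : |f x| ≤ 0 := by rwa [ENNReal.ofReal_eq_zero] at h
        exact abs_eq_zero.1 (le_antisymm h1 (abs_nonneg _))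
      simp [hfx]
    · simp [h]
  obtain ⟨K₁, hK₁, hnear⟩ := near_bound μ f ν α Λ hν hα2 hΛ hMorrey
  obtain ⟨K₂, hK₂, hfar⟩ :=
    far_bound μ D₀ hD₀ hdistD ν β α Λ C₀ hν hβ hα0 hα2 hΛ hC₀ G hG₂ f hMorrey γ hcase
  -- integrability of the potentials
  have hmeasGf : ∀ x : X, Measurable fun y => G x y * f y := fun x =>
    (hGmeas.comp measurable_prodMk_left).mul hf
  have hweight : ∀ x : X, Measurable fun y : X =>
      ENNReal.ofReal C₀ * ENNReal.ofReal (dist x y ^ (2 - ν) * |f y|) := by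
    intro x
    exact ((((measurable_rpow_const' (2 - ν)).comp
      ((continuous_const.dist continuous_id).measurable)).mul hf.abs).ennreal_ofReal).const_mul _
  have hint : ∀ x : X, Integrable (fun y => G x y * f y) μ := by
    intro x
    refine ⟨(hmeasGf x).aestronglyMeasurable, ?_⟩
    rw [hasFiniteIntegral_iff_norm]
    have hsplit : ∫⁻ y, ENNReal.ofReal ‖G x y * f y‖ ∂μ
        = (∫⁻ y in ({x} : Set X), ENNReal.ofReal ‖G x y * f y‖ ∂μ) +
            ∫⁻ y in ({x} : Set X)ᶜ, ENNReal.ofReal ‖G x y * f y‖ ∂μ :=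
      (lintegral_add_compl _ (measurableSet_singleton x)).symm
    rw [hsplit]
    have h1 : ∫⁻ y in ({x} : Set X), ENNReal.ofReal ‖G x y * f y‖ ∂μ = 0 := by
      have := hsing (fun y => G x y) x
      simpa [Real.norm_eq_abs, abs_mul] using this
    have h2 : ∫⁻ y in ({x} : Set X)ᶜ, ENNReal.ofReal ‖G x y * f y‖ ∂μ
        ≤ ENNReal.ofReal C₀ * ENNReal.ofReal (K₁ * (2 * D₀) ^ (2 - α)) := by
      calc ∫⁻ y in ({x} : Set X)ᶜ, ENNReal.ofReal ‖G x y * f y‖ ∂μ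
          ≤ ∫⁻ y in ({x} : Set X)ᶜ,
              ENNReal.ofReal C₀ * ENNReal.ofReal (dist x y ^ (2 - ν) * |f y|) ∂μ := by
            refine setLIntegral_mono' (measurableSet_singleton x).compl fun y hy => ?_
            have hxy : x ≠ y := fun h => hy (by simp [h])
            rw [← ENNReal.ofReal_mul hC₀.le]
            refine ENNReal.ofReal_le_ofReal ?_
            rw [Real.norm_eq_abs, abs_mul]
            calc |G x y| * |f y| ≤ (C₀ * dist x y ^ (2 - ν)) * |f y| :=
                  mul_le_mul_of_nonneg_right (hG₁ x y hxy) (abs_nonneg _)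
              _ = C₀ * (dist x y ^ (2 - ν) * |f y|) := by ring
        _ ≤ ∫⁻ y in Metric.ball x (2 * D₀),
              ENNReal.ofReal C₀ * ENNReal.ofReal (dist x y ^ (2 - ν) * |f y|) ∂μ := by
            apply lintegral_mono_set
            intro y _
            exact Metric.mem_ball.2 (by rw [dist_comm]; linarith [hdistD x y])
        _ = ENNReal.ofReal C₀ *
              ∫⁻ y in Metric.ball x (2 * D₀), ENNReal.ofReal (dist x y ^ (2 - ν) * |f y|) ∂μ :=
            lintegral_const_mul' _ _ ENNReal.ofReal_ne_top
        _ ≤ ENNReal.ofReal C₀ * ENNReal.ofReal (K₁ * (2 * D₀) ^ (2 - α)) := by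
            gcongr
            exact hnear x (2 * D₀) (by linarith)
    rw [h1, zero_add]
    exact lt_of_le_of_lt h2 (ENNReal.mul_lt_top ENNReal.ofReal_lt_top ENNReal.ofReal_lt_top)
  -- the constant
  set C := C₀ * K₁ * ((2:ℝ) ^ (2 - α) + (3:ℝ) ^ (2 - α)) * D₀ ^ (2 - α - γ) + K₂ with hCdef
  have hC : 0 < C := by
    have h2p : (0:ℝ) < (2:ℝ) ^ (2 - α) := Real.rpow_pos_of_pos (by norm_num) _
    have h3p : (0:ℝ) < (3:ℝ) ^ (2 - α) := Real.rpow_pos_of_pos (by norm_num) _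
    have hDp : (0:ℝ) < D₀ ^ (2 - α - γ) := Real.rpow_pos_of_pos hD₀ _
    have := mul_pos (mul_pos (mul_pos hC₀ hK₁) (by linarith : (0:ℝ) < 2 ^ (2-α) + 3 ^ (2-α))) hDp
    linarith
  refine ⟨C, hC, ?_⟩
  intro p q
  rcases eq_or_lt_of_le (dist_nonneg (x := p) (y := q)) with hr0 | hr
  · have hpq : p = q := dist_eq_zero.1 hr0.symm
    subst hpq
    simp [dist_self, Real.zero_rpow hγ0.ne']
  · set r := dist p q with hrdef
    have hdiff : (∫ y, G p y * f y ∂μ) - ∫ y, G q y * f y ∂μ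
        = ∫ y, (G p y - G q y) * f y ∂μ := by
      rw [← integral_sub (hint p) (hint q)]
      congr 1
      funext y
      ring
    rw [hdiff]
    have habs : |∫ y, (G p y - G q y) * f y ∂μ|
        ≤ (∫⁻ y, ENNReal.ofReal (|G p y - G q y| * |f y|) ∂μ).toReal := by
      have := norm_integral_le_lintegral_norm (μ := μ) (f := fun y => (G p y - G q y) * f y)
      simpa [Real.norm_eq_abs, abs_mul] using this
    refine le_trans habs ?_
    set T := C₀ * (K₁ * (2 * r) ^ (2 - α)) + C₀ * (K₁ * (3 * r) ^ (2 - α)) + K₂ * r ^ γ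
      with hTdef
    have hT0 : 0 ≤ T := by positivity
    -- main lintegral bound
    have hI : ∫⁻ y, ENNReal.ofReal (|G p y - G q y| * |f y|) ∂μ ≤ ENNReal.ofReal T := by
      set E : Set X := {p, q} with hEdef
      have hEmeas : MeasurableSet E := (measurableSet_singleton q).insert p
      have hEzero : ∫⁻ y in E, ENNReal.ofReal (|G p y - G q y| * |f y|) ∂μ = 0 := by
        have hEun : E = ({p} : Set X) ∪ {q} := by rw [hEdef, Set.insert_eq]
        refine le_antisymm ?_ zero_le
        calc ∫⁻ y in E, ENNReal.ofReal (|G p y - G q y| * |f y|) ∂μ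
            ≤ (∫⁻ y in ({p} : Set X), ENNReal.ofReal (|G p y - G q y| * |f y|) ∂μ) +
                ∫⁻ y in ({q} : Set X), ENNReal.ofReal (|G p y - G q y| * |f y|) ∂μ := by
              rw [hEun]; exact lintegral_union_le _ _ _
          _ = 0 := by
              rw [hsing (fun y => G p y - G q y) p, hsing (fun y => G p y - G q y) q, add_zero]
      have hnear2 : ∫⁻ y in Eᶜ ∩ Metric.ball p (2 * r),
          ENNReal.ofReal (|G p y - G q y| * |f y|) ∂μ
          ≤ ENNReal.ofReal (C₀ * (K₁ * (2 * r) ^ (2 - α))) +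
              ENNReal.ofReal (C₀ * (K₁ * (3 * r) ^ (2 - α))) := by
        have hmeasEb : MeasurableSet (Eᶜ ∩ Metric.ball p (2 * r)) :=
          hEmeas.compl.inter measurableSet_ball
        have hpt : ∀ y ∈ Eᶜ ∩ Metric.ball p (2 * r),
            ENNReal.ofReal (|G p y - G q y| * |f y|)
              ≤ ENNReal.ofReal C₀ * ENNReal.ofReal (dist p y ^ (2 - ν) * |f y|) +
                ENNReal.ofReal C₀ * ENNReal.ofReal (dist q y ^ (2 - ν) * |f y|) := by
          intro y hy
          obtain ⟨hyE, _⟩ := hy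
          have hyp : p ≠ y := fun h => hyE (by rw [hEdef]; exact Set.mem_insert_iff.2 (Or.inl h.symm))
          have hyq : q ≠ y := fun h => hyE (by rw [hEdef]; exact Set.mem_insert_iff.2 (Or.inr (by simp [h.symm])))
          have hb : |G p y - G q y| ≤ C₀ * dist p y ^ (2 - ν) + C₀ * dist q y ^ (2 - ν) :=
            (abs_sub _ _).trans (add_le_add (hG₁ p y hyp) (hG₁ q y hyq))
          calc ENNReal.ofReal (|G p y - G q y| * |f y|)
              ≤ ENNReal.ofReal (C₀ * (dist p y ^ (2 - ν) * |f y|) +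
                  C₀ * (dist q y ^ (2 - ν) * |f y|)) := by
                refine ENNReal.ofReal_le_ofReal ?_
                have := mul_le_mul_of_nonneg_right hb (abs_nonneg (f y))
                calc |G p y - G q y| * |f y|
                    ≤ (C₀ * dist p y ^ (2 - ν) + C₀ * dist q y ^ (2 - ν)) * |f y| := this
                  _ = C₀ * (dist p y ^ (2 - ν) * |f y|) + C₀ * (dist q y ^ (2 - ν) * |f y|) := by
                      ring
            _ = ENNReal.ofReal C₀ * ENNReal.ofReal (dist p y ^ (2 - ν) * |f y|) +
                  ENNReal.ofReal C₀ * ENNReal.ofReal (dist q y ^ (2 - ν) * |f y|) := by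
                rw [ENNReal.ofReal_add (by positivity) (by positivity),
                  ENNReal.ofReal_mul hC₀.le, ENNReal.ofReal_mul hC₀.le]
        calc ∫⁻ y in Eᶜ ∩ Metric.ball p (2 * r), ENNReal.ofReal (|G p y - G q y| * |f y|) ∂μ
            ≤ ∫⁻ y in Eᶜ ∩ Metric.ball p (2 * r),
                (ENNReal.ofReal C₀ * ENNReal.ofReal (dist p y ^ (2 - ν) * |f y|) +
                  ENNReal.ofReal C₀ * ENNReal.ofReal (dist q y ^ (2 - ν) * |f y|)) ∂μ :=
              setLIntegral_mono' hmeasEb hpt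
          _ = (∫⁻ y in Eᶜ ∩ Metric.ball p (2 * r),
                ENNReal.ofReal C₀ * ENNReal.ofReal (dist p y ^ (2 - ν) * |f y|) ∂μ) +
                ∫⁻ y in Eᶜ ∩ Metric.ball p (2 * r),
                  ENNReal.ofReal C₀ * ENNReal.ofReal (dist q y ^ (2 - ν) * |f y|) ∂μ :=
              lintegral_add_left (hweight p) _
          _ ≤ (∫⁻ y in Metric.ball p (2 * r),
                ENNReal.ofReal C₀ * ENNReal.ofReal (dist p y ^ (2 - ν) * |f y|) ∂μ) +
                ∫⁻ y in Metric.ball q (3 * r),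
                  ENNReal.ofReal C₀ * ENNReal.ofReal (dist q y ^ (2 - ν) * |f y|) ∂μ := by
              refine add_le_add (lintegral_mono_set Set.inter_subset_right)
                (lintegral_mono_set ?_)
              intro y hy
              obtain ⟨_, hyb⟩ := hy
              have h1 : dist y p < 2 * r := Metric.mem_ball.1 hyb
              have h2 : dist y q ≤ dist y p + dist p q := dist_triangle y p q
              exact Metric.mem_ball.2 (by rw [← hrdef] at *; linarith)
          _ ≤ ENNReal.ofReal (C₀ * (K₁ * (2 * r) ^ (2 - α))) +
                ENNReal.ofReal (C₀ * (K₁ * (3 * r) ^ (2 - α))) := by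
              refine add_le_add ?_ ?_
              · rw [lintegral_const_mul' _ _ ENNReal.ofReal_ne_top,
                  ENNReal.ofReal_mul hC₀.le]
                exact mul_le_mul_right (hnear p (2 * r) (by linarith)) _
              · rw [lintegral_const_mul' _ _ ENNReal.ofReal_ne_top,
                  ENNReal.ofReal_mul hC₀.le]
                exact mul_le_mul_right (hnear q (3 * r) (by linarith)) _
      have hcovEc : Eᶜ ⊆ (Eᶜ ∩ Metric.ball p (2 * r)) ∪ {y : X | 2 * r ≤ dist p y} := by
        intro y hy
        rcases lt_or_ge (dist p y) (2 * r) with h | h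
        · exact Or.inl ⟨hy, Metric.mem_ball.2 (by rw [dist_comm]; exact h)⟩
        · exact Or.inr h
      calc ∫⁻ y, ENNReal.ofReal (|G p y - G q y| * |f y|) ∂μ
          = (∫⁻ y in E, ENNReal.ofReal (|G p y - G q y| * |f y|) ∂μ) +
              ∫⁻ y in Eᶜ, ENNReal.ofReal (|G p y - G q y| * |f y|) ∂μ :=
            (lintegral_add_compl _ hEmeas).symm
        _ = ∫⁻ y in Eᶜ, ENNReal.ofReal (|G p y - G q y| * |f y|) ∂μ := by
            rw [hEzero, zero_add]
        _ ≤ ∫⁻ y in (Eᶜ ∩ Metric.ball p (2 * r)) ∪ {y : X | 2 * r ≤ dist p y},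
              ENNReal.ofReal (|G p y - G q y| * |f y|) ∂μ := lintegral_mono_set hcovEc
        _ ≤ (∫⁻ y in Eᶜ ∩ Metric.ball p (2 * r),
              ENNReal.ofReal (|G p y - G q y| * |f y|) ∂μ) +
              ∫⁻ y in {y : X | 2 * r ≤ dist p y},
                ENNReal.ofReal (|G p y - G q y| * |f y|) ∂μ := lintegral_union_le _ _ _
        _ ≤ (ENNReal.ofReal (C₀ * (K₁ * (2 * r) ^ (2 - α))) +
              ENNReal.ofReal (C₀ * (K₁ * (3 * r) ^ (2 - α)))) +
              ENNReal.ofReal (K₂ * r ^ γ) := add_le_add hnear2 (hfar p q hr)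
        _ = ENNReal.ofReal T := by
            rw [hTdef, ENNReal.ofReal_add (by positivity) (by positivity),
              ENNReal.ofReal_add (by positivity) (by positivity)]
    refine le_trans (ENNReal.toReal_le_of_le_ofReal hT0 hI) ?_
    -- final real arithmetic
    have e2 : ((2:ℝ) * r) ^ (2 - α) = 2 ^ (2 - α) * r ^ (2 - α) :=
      Real.mul_rpow (by norm_num) dist_nonneg
    have e3 : ((3:ℝ) * r) ^ (2 - α) = 3 ^ (2 - α) * r ^ (2 - α) :=
      Real.mul_rpow (by norm_num) dist_nonneg
    have e4 : r ^ (2 - α) ≤ D₀ ^ (2 - α - γ) * r ^ γ := by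
      have e4' : r ^ ((2 - α - γ) + γ) = r ^ (2 - α - γ) * r ^ γ := Real.rpow_add hr _ _
      rw [show (2 - α - γ) + γ = 2 - α by ring] at e4'
      rw [e4']
      exact mul_le_mul_of_nonneg_right
        (Real.rpow_le_rpow dist_nonneg (hdistD p q) (by linarith))
        (Real.rpow_nonneg dist_nonneg _)
    have hcoef : (0:ℝ) ≤ C₀ * K₁ * ((2:ℝ) ^ (2 - α) + (3:ℝ) ^ (2 - α)) := by positivity
    calc T = C₀ * K₁ * ((2:ℝ) ^ (2 - α) + (3:ℝ) ^ (2 - α)) * r ^ (2 - α) + K₂ * r ^ γ := by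
          rw [hTdef, e2, e3]; ring
      _ ≤ C₀ * K₁ * ((2:ℝ) ^ (2 - α) + (3:ℝ) ^ (2 - α)) * (D₀ ^ (2 - α - γ) * r ^ γ) +
            K₂ * r ^ γ := by
          exact add_le_add_left (mul_le_mul_of_nonneg_left e4 hcoef) _
      _ = C * dist p q ^ γ := by rw [hCdef, ← hrdef]; ring

/-- **Hölder continuity of Green potentials of Morrey data** (Theorem 4.2 of
Akutagawa–Carron–Mazzeo, *The Yamabe problem on Dirichlet spaces*, analytic form).

Let `(X,d)` be a metric space of finite diameter `D₀ > 0` with a finite Borel measure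
`μ`, and fix `ν > 2`, `β > 0`, `α ∈ [0,2)`, `Λ > 0`, `C₀ > 0`. Let `G : X × X → ℝ` be
measurable with `|G(x,y)| ≤ C₀ d(x,y)^{2−ν}` for `x ≠ y` and
`|G(p,y) − G(q,y)| ≤ C₀ (d(p,q)/d(p,y))^β d(q,y)^{2−ν}` whenever `d(p,q) ≤ d(p,y)/2`.
Let `f` be measurable with `∫_{B(x,r)} |f| dμ ≤ Λ r^{ν−α}` for all `x`, `r > 0` and set
`u(x) = ∫ G(x,y) f(y) dμ(y)`. Then `u` is Hölder continuous of exponent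
`γ = min{β, 2−α}` if `β ≠ 2−α`, and of every exponent `γ ∈ (0, 2−α)` if `β = 2−α`,
with constants depending only on `ν, α, β, C₀, Λ, D₀` (and `γ`). -/
theorem green_potential_holder
    {X : Type*} [MetricSpace X] [MeasurableSpace X] [BorelSpace X]
    (μ : Measure X) [IsFiniteMeasure μ]
    (D₀ : ℝ) (hD₀ : 0 < D₀) (hdiam : EMetric.diam (Set.univ : Set X) = ENNReal.ofReal D₀)
    (ν β α Λ C₀ : ℝ) (hν : 2 < ν) (hβ : 0 < β) (hα : α ∈ Set.Ico (0 : ℝ) 2)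
    (hΛ : 0 < Λ) (hC₀ : 0 < C₀)
    (G : X → X → ℝ) (hGmeas : Measurable (Function.uncurry G))
    (hG₁ : ∀ x y : X, x ≠ y → |G x y| ≤ C₀ * dist x y ^ (2 - ν))
    (hG₂ : ∀ p q y : X, dist p q ≤ dist p y / 2 →
      |G p y - G q y| ≤ C₀ * (dist p q / dist p y) ^ β * dist q y ^ (2 - ν))
    (f : X → ℝ) (hf : Measurable f)
    (hMorrey : ∀ (x : X) (r : ℝ), 0 < r →
      (∫⁻ y in Metric.ball x r, ENNReal.ofReal |f y| ∂μ)
        ≤ ENNReal.ofReal (Λ * r ^ (ν - α)))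
    (u : X → ℝ) (hu : u = fun x => ∫ y, G x y * f y ∂μ) :
    (β ≠ 2 - α →
      ∃ C : ℝ, 0 < C ∧ ∀ p q : X, |u p - u q| ≤ C * dist p q ^ min β (2 - α)) ∧
    (β = 2 - α →
      ∀ γ : ℝ, γ ∈ Set.Ioo 0 (2 - α) →
        ∃ C : ℝ, 0 < C ∧ ∀ p q : X, |u p - u q| ≤ C * dist p q ^ γ) := by
  subst hu
  constructor
  · intro hne
    rcases lt_or_gt_of_ne hne with hlt | hgt
    · rw [min_eq_left hlt.le]
      exact key_estimate μ D₀ hD₀ hdiam ν β α Λ C₀ hν hβ hα hΛ hC₀ G hGmeas hG₁ hG₂ f hf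
        hMorrey β (Or.inl ⟨hβ, le_refl β, hlt⟩)
    · rw [min_eq_right hgt.le]
      exact key_estimate μ D₀ hD₀ hdiam ν β α Λ C₀ hν hβ hα hΛ hC₀ G hGmeas hG₁ hG₂ f hf
        hMorrey (2 - α) (Or.inr ⟨rfl, hgt⟩)
  · intro heq γ hγ
    exact key_estimate μ D₀ hD₀ hdiam ν β α Λ C₀ hν hβ hα hΛ hC₀ G hGmeas hG₁ hG₂ f hf
      hMorrey γ (Or.inl ⟨hγ.1, by rw [heq]; exact hγ.2.le, hγ.2⟩)
end

section
/- Let (X,d) be a metric space, x₀ ∈ X, r > 0, C_H > 1, and let h : X → ℝ be bounded on B(x₀, 2r). Assume the following Harnack property: for every p ∈ B(x₀, r), every s > 0 with 2s ≤ r, and every constant c ∈ ℝ, if h − c ≥ 0 on B(p, 2s) then sup_{B(p,s)}(h − c) ≤ C_H·inf_{B(p,s)}(h − c), and if c − h ≥ 0 on B(p, 2s) then sup_{B(p,s)}(c − h) ≤ C_H·inf_{B(p,s)}(c − h). Then, with β := log₂((C_H+1)/(C_H−1)), there is a constant C depending only on C_H such that for all p, q ∈ B(x₀, r): |h(p) −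 h(q)| ≤ C·(d(p,q)/r)^β·sup_{z ∈ B(x₀,2r)} |h(z)|. -/
universe u

/-- **Hölder continuity from the Harnack inequality** (Lemma 4.1 of
Akutagawa–Carron–Mazzeo, *The Yamabe problem on Dirichlet spaces*, explicit form).

Let `C_H > 1` and `β = log₂((C_H+1)/(C_H−1))`. There is a constant `C` depending only on
`C_H` with the following property: whenever `(X,d)` is a metric space, `x₀ ∈ X`, `r > 0`,
and `h : X → ℝ` is bounded on `B(x₀,2r)` and satisfies the Harnack property — for every
`p ∈ B(x₀,r)`, every `s > 0` with `2s ≤ r` and every `c ∈ ℝ`, if `h − c ≥ 0` on `B(p,2s)`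
then `sup_{B(p,s)}(h−c) ≤ C_H inf_{B(p,s)}(h−c)`, and if `c − h ≥ 0` on `B(p,2s)` then
`sup_{B(p,s)}(c−h) ≤ C_H inf_{B(p,s)}(c−h)` — one has, for all `p, q ∈ B(x₀,r)`,
`|h(p) − h(q)| ≤ C (d(p,q)/r)^β sup_{B(x₀,2r)} |h|`. -/
theorem holder_from_harnack (CH : ℝ) (hCH : 1 < CH) :
    ∃ C : ℝ, 0 < C ∧
      ∀ (X : Type u) [MetricSpace X], ∀ (x₀ : X) (r : ℝ), 0 < r →
      ∀ h : X → ℝ, (∃ K : ℝ, ∀ z ∈ Metric.ball x₀ (2 * r), |h z| ≤ K) →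
      (∀ p ∈ Metric.ball x₀ r, ∀ s : ℝ, 0 < s → 2 * s ≤ r → ∀ c : ℝ,
        ((∀ z ∈ Metric.ball p (2 * s), 0 ≤ h z - c) →
          ∀ z ∈ Metric.ball p s, ∀ w ∈ Metric.ball p s, h z - c ≤ CH * (h w - c)) ∧
        ((∀ z ∈ Metric.ball p (2 * s), 0 ≤ c - h z) →
          ∀ z ∈ Metric.ball p s, ∀ w ∈ Metric.ball p s, c - h z ≤ CH * (c - h w))) →
      ∀ p ∈ Metric.ball x₀ r, ∀ q ∈ Metric.ball x₀ r,
        |h p - h q|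
          ≤ C * (dist p q / r) ^ Real.logb 2 ((CH + 1) / (CH - 1))
            * sSup ((fun z => |h z|) '' Metric.ball x₀ (2 * r)) := by
  set θ : ℝ := (CH - 1) / (CH + 1) with hθdef
  have hCH0 : (0:ℝ) < CH + 1 := by linarith
  have hCH1 : (0:ℝ) < CH - 1 := by linarith
  have hθ0 : 0 < θ := div_pos hCH1 hCH0
  have hθ1 : θ < 1 := by
    rw [hθdef, div_lt_one hCH0]; linarith
  set β : ℝ := Real.logb 2 ((CH + 1) / (CH - 1)) with hβdef
  have hβ0 : 0 < β := by
    apply Real.logb_pos (by norm_num)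
    rw [lt_div_iff₀ hCH1]; linarith
  have hθβ : θ = (2:ℝ) ^ (-β) := by
    have h1 : (2:ℝ) ^ β = (CH + 1) / (CH - 1) := by
      rw [hβdef]
      exact Real.rpow_logb (by norm_num) (by norm_num) (div_pos hCH0 hCH1)
    rw [Real.rpow_neg (by norm_num), h1, hθdef, inv_div]
  -- key rpow comparison
  have hpow : ∀ j : ℕ, ∀ u : ℝ, ((2:ℝ)^j)⁻¹ ≤ u → θ ^ j ≤ u ^ β := by
    intro j u hu
    have h2j : (0:ℝ) < ((2:ℝ)^j)⁻¹ := by positivity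
    have e1 : θ ^ j = (((2:ℝ)^j)⁻¹ : ℝ) ^ β := by
      rw [hθβ, ← Real.rpow_natCast ((2:ℝ) ^ (-β)) j, ← Real.rpow_mul (by norm_num)]
      rw [show (-β) * ((j:ℕ):ℝ) = (j:ℝ) * (-β) by ring, Real.rpow_mul (by norm_num)]
      rw [Real.rpow_natCast, ← Real.rpow_natCast (2:ℝ) j, ← Real.rpow_neg (by norm_num),
        ← Real.rpow_mul (by norm_num), ← Real.rpow_mul (by norm_num)]
      ring_nf
    rw [e1]
    exact Real.rpow_le_rpow h2j.le hu hβ0.le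
  refine ⟨2 / θ ^ 2, by positivity, ?_⟩
  intro X _ x₀ r hr h hbound harnack p hp q hq
  obtain ⟨K, hK⟩ := hbound
  set S : ℝ := sSup ((fun z => |h z|) '' Metric.ball x₀ (2 * r)) with hSdef
  have hx₀mem : x₀ ∈ Metric.ball x₀ (2 * r) := Metric.mem_ball_self (by positivity)
  have hbdd : BddAbove ((fun z => |h z|) '' Metric.ball x₀ (2 * r)) := by
    refine ⟨K, ?_⟩
    rintro y ⟨z, hz, rfl⟩; exact hK z hz
  have hS : ∀ z ∈ Metric.ball x₀ (2 * r), |h z| ≤ S := by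
    intro z hz
    exact le_csSup hbdd ⟨z, hz, rfl⟩
  have hS0 : 0 ≤ S := le_trans (abs_nonneg (h x₀)) (hS x₀ hx₀mem)
  -- inclusion lemma
  have hsub : ∀ t : ℝ, t ≤ r → Metric.ball p t ⊆ Metric.ball x₀ (2 * r) := by
    intro t ht z hz
    simp only [Metric.mem_ball] at *
    calc dist z x₀ ≤ dist z p + dist p x₀ := dist_triangle _ _ _
      _ < t + r := by linarith
      _ ≤ 2 * r := by linarith
  have hrad : ∀ k : ℕ, r / 2 ^ (k+1) ≤ r := by
    intro k
    apply div_le_self hr.le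
    exact one_le_pow₀ (by norm_num)
  -- the key oscillation decay
  have key : ∀ k : ℕ, ∀ z ∈ Metric.ball p (r / 2 ^ (k+1)),
      ∀ w ∈ Metric.ball p (r / 2 ^ (k+1)), h z - h w ≤ 2 * S * θ ^ k := by
    intro k
    induction k with
    | zero =>
      intro z hz w hw
      have hz' := abs_le.mp (hS z (hsub _ (hrad 0) hz))
      have hw' := abs_le.mp (hS w (hsub _ (hrad 0) hw))
      simp only [pow_zero, mul_one]
      linarith [hz'.2, hw'.1]
    | succ k ih =>
      intro z hz w hw
      set A := Metric.ball p (r / 2 ^ (k+1)) with hAdef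
      have hApos : (0:ℝ) < r / 2 ^ (k+1) := by positivity
      have hAne : A.Nonempty := ⟨p, by simp [hAdef, hApos]⟩
      have hAne' : (h '' A).Nonempty := hAne.image _
      have hAsub : A ⊆ Metric.ball x₀ (2 * r) := hsub _ (hrad k)
      have hbddA : BddAbove (h '' A) := by
        refine ⟨S, ?_⟩; rintro y ⟨z', hz', rfl⟩
        exact (abs_le.mp (hS z' (hAsub hz'))).2
      have hbddA' : BddBelow (h '' A) := by
        refine ⟨-S, ?_⟩; rintro y ⟨z', hz', rfl⟩
        exact (abs_le.mp (hS z' (hAsub hz'))).1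
      set m : ℝ := sInf (h '' A) with hmdef
      set M : ℝ := sSup (h '' A) with hMdef
      have hm : ∀ z' ∈ A, m ≤ h z' := fun z' hz' => csInf_le hbddA' ⟨z', hz', rfl⟩
      have hM : ∀ z' ∈ A, h z' ≤ M := fun z' hz' => le_csSup hbddA ⟨z', hz', rfl⟩
      have hMm : M - m ≤ 2 * S * θ ^ k := by
        have hMle : M ≤ m + 2 * S * θ ^ k := by
          apply csSup_le hAne'
          rintro y ⟨z', hz', rfl⟩
          have hmge : h z' - 2 * S * θ ^ k ≤ m := by
            apply le_csInf hAne'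
            rintro y' ⟨w', hw', rfl⟩
            have := ih z' hz' w' hw'
            linarith
          linarith
        linarith
      -- apply Harnack at scale s = r / 2^(k+2)
      set s : ℝ := r / 2 ^ (k+2) with hsdef
      have hs0 : 0 < s := by positivity
      have h2s : 2 * s = r / 2 ^ (k+1) := by
        rw [hsdef]; field_simp; ring
      have h2sr : 2 * s ≤ r := by rw [h2s]; exact hrad k
      obtain ⟨har1, _⟩ := harnack p hp s hs0 h2sr m
      obtain ⟨_, har4⟩ := harnack p hp s hs0 h2sr M
      have hball2s : Metric.ball p (2 * s) = A := by rw [h2s, hAdef]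
      have hz' : z ∈ Metric.ball p s := by
        rw [hsdef]; exact hz
      have hw' : w ∈ Metric.ball p s := by
        rw [hsdef]; exact hw
      have e1 : h z - m ≤ CH * (h w - m) := by
        apply har1 _ z hz' w hw'
        intro z'' hz''; rw [hball2s] at hz''; linarith [hm z'' hz'']
      have e2 : M - h w ≤ CH * (M - h z) := by
        apply har4 _ w hw' z hz'
        intro z'' hz''; rw [hball2s] at hz''; linarith [hM z'' hz'']
      have e4 : h z - h w ≤ θ * (M - m) := by
        rw [hθdef, div_mul_eq_mul_div, le_div_iff₀ hCH0]
        linarith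
      calc h z - h w ≤ θ * (M - m) := e4
        _ ≤ θ * (2 * S * θ ^ k) := mul_le_mul_of_nonneg_left hMm hθ0.le
        _ = 2 * S * θ ^ (k+1) := by ring
  -- final assembly
  set d : ℝ := dist p q with hddef
  have hd0 : 0 ≤ d := dist_nonneg
  rcases eq_or_lt_of_le hd0 with hd | hd
  · -- d = 0
    have hpq : p = q := by
      rw [← dist_eq_zero, ← hddef, ← hd]
    rw [hpq, sub_self, abs_zero, ← hd, zero_div, Real.zero_rpow (ne_of_gt hβ0)]
    simp
  · -- d > 0
    have hhpq : ∀ j : ℕ, d < r / 2 ^ (j+1) → |h p - h q| ≤ 2 * S * θ ^ j := by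
      intro j hj
      have hpball : p ∈ Metric.ball p (r / 2 ^ (j+1)) := by
        simp only [Metric.mem_ball, dist_self]; positivity
      have hqball : q ∈ Metric.ball p (r / 2 ^ (j+1)) := by
        simp only [Metric.mem_ball, dist_comm q p]; exact hj
      have h1 := key j p hpball q hqball
      have h2 := key j q hqball p hpball
      rw [abs_le]; constructor <;> linarith
    have hCgoal : ∀ j : ℕ, |h p - h q| ≤ 2 * S * θ ^ j →
        ((2:ℝ)^(j+2))⁻¹ ≤ d / r → |h p - h q| ≤ 2 / θ ^ 2 * (d / r) ^ β * S := by
      intro j hosc hdr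
      have hrp := hpow (j+2) (d/r) (by exact_mod_cast hdr)
      calc |h p - h q| ≤ 2 * S * θ ^ j := hosc
        _ = 2 / θ ^ 2 * θ ^ (j+2) * S := by
            have : θ ^ (j+2) = θ ^ j * θ ^ 2 := by ring
            rw [this]; field_simp
        _ ≤ 2 / θ ^ 2 * (d / r) ^ β * S := by
            apply mul_le_mul_of_nonneg_right _ hS0
            apply mul_le_mul_of_nonneg_left hrp (by positivity)
    rcases lt_or_ge d (r / 2) with hcase | hcase
    · -- d < r/2 : find the right scale
      have ht2 : (2:ℝ) < r / d := by
        rw [lt_div_iff₀ hd]; linarith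
      have hex : ∃ n : ℕ, r / d ≤ 2 ^ n := by
        obtain ⟨n, hn⟩ := pow_unbounded_of_one_lt (r / d) (by norm_num : (1:ℝ) < 2)
        exact ⟨n, hn.le⟩
      classical
      have hn : r / d ≤ 2 ^ (Nat.find hex) := Nat.find_spec hex
      have hn2 : 2 ≤ Nat.find hex := by
        rw [Nat.le_find_iff]
        intro m hm
        interval_cases m
        · push_neg; norm_num; linarith
        · push_neg; norm_num; linarith
      set n := Nat.find hex with hndef
      set k : ℕ := n - 2 with hkdef
      have hk2 : k + 2 = n := by omega
      have hk1 : (2:ℝ) ^ (k+1) < r / d := by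
        have hmin := Nat.find_min hex (show n - 1 < n by omega)
        push_neg at hmin
        have hexp : k + 1 = n - 1 := by omega
        rw [hexp]; exact hmin
      have hdlt : d < r / 2 ^ (k+1) := by
        rw [lt_div_iff₀ (by positivity : (0:ℝ) < 2 ^ (k+1))]
        rw [lt_div_iff₀ hd] at hk1
        linarith
      apply hCgoal k (hhpq k hdlt)
      rw [hk2, le_div_iff₀ hr, inv_mul_le_iff₀ (by positivity : (0:ℝ) < 2 ^ n)]
      rw [div_le_iff₀ hd] at hn
      exact hn
    · -- d ≥ r/2
      have hp2 : p ∈ Metric.ball x₀ (2 * r) := by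
        have := Metric.mem_ball.mp hp
        exact Metric.mem_ball.mpr (by linarith)
      have hq2 : q ∈ Metric.ball x₀ (2 * r) := by
        have := Metric.mem_ball.mp hq
        exact Metric.mem_ball.mpr (by linarith)
      have hosc0 : |h p - h q| ≤ 2 * S * θ ^ 0 := by
        have h1 := abs_le.mp (hS p hp2)
        have h2 := abs_le.mp (hS q hq2)
        simp only [pow_zero, mul_one]
        rw [abs_le]; constructor <;> linarith
      apply hCgoal 0 hosc0
      rw [le_div_iff₀ hr]
      norm_num
      linarith
end
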